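/- arXiv:1910.04589 — 5 statements merged into one kernel-verified Lean document; each statement's English description precedes it below -/
import Mathlib

section
/- If I = ℕ and each map π_{i+1} : X_{i+1} → X_i is a submetry, then each projection π^∞_i : X_∞ → X_i is a submetry. -/
open Set

/-!
Lift `yₖ` successively along the fibres over `x (k + 1), x (k + 2), …` and project it down to
the levels below `k`. Lifting preserves the distance to `x`, and the 1-Lipschitz projections do not
increase it, so the resulting compatible sequence `y` stays within `dist (x k) yₖ` of `x`; hence it
is bounded and `d_∞(x, y)` is attained at level `k`.
-/

lemma bddAbove_range_dist_trans {ι : Type*} {X : ι → Type*} [∀ i, PseudoMetricSpace (X i)]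
    {a b c : ∀ i, X i} (hab : BddAbove (range fun i => dist (a i) (b i)))
    (hbc : BddAbove (range fun i => dist (b i) (c i))) :
    BddAbove (range fun i => dist (a i) (c i)) := by
  obtain ⟨C, hC⟩ := hab
  obtain ⟨C', hC'⟩ := hbc
  refine ⟨C + C', forall_mem_range.2 fun i => ?_⟩
  exact (dist_triangle _ (b i) _).trans
    (add_le_add (hC (mem_range_self i)) (hC' (mem_range_self i)))

lemma exists_compatible_extension_zero {X : ℕ → Type*} [∀ i, MetricSpace (X i)]
    {π : ∀ i, X (i + 1) → X i}
    (hlift : ∀ i (x : X (i + 1)) (y : X i), ∃ x', π i x' = y ∧ dist x x' = dist (π i x) y)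
    {x : ∀ i, X i} (hx : ∀ i, π i (x (i + 1)) = x i) (y₀ : X 0) :
    ∃ y : ∀ i, X i, (∀ i, π i (y (i + 1)) = y i) ∧ y 0 = y₀ ∧
      ∀ i, dist (x i) (y i) = dist (x 0) y₀ := by
  choose lift hlift_proj hlift_dist using hlift
  let y : ∀ i, X i := fun i => Nat.rec (motive := X) y₀ (fun i yi => lift i (x (i + 1)) yi) i
  refine ⟨y, fun i => hlift_proj i _ _, rfl, fun i => ?_⟩
  induction i with
  | zero => rfl
  | succ i ih => rw [← ih, ← hx i]; exact hlift_dist i _ _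

lemma exists_compatible_extension (k : ℕ) :
    ∀ {X : ℕ → Type*} [∀ i, MetricSpace (X i)] {π : ∀ i, X (i + 1) → X i},
    (∀ i, LipschitzWith 1 (π i)) →
    (∀ i (x : X (i + 1)) (y : X i), ∃ x', π i x' = y ∧ dist x x' = dist (π i x) y) →
    ∀ {x : ∀ i, X i}, (∀ i, π i (x (i + 1)) = x i) → ∀ yₖ : X k,
    ∃ y : ∀ i, X i, (∀ i, π i (y (i + 1)) = y i) ∧ y k = yₖ ∧
      ∀ i, dist (x i) (y i) ≤ dist (x k) yₖ := by
  induction k with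
  | zero =>
    intro X _ π _ hlift x hx y₀
    obtain ⟨y, hy, hy₀, hxy⟩ := exists_compatible_extension_zero hlift hx y₀
    exact ⟨y, hy, hy₀, fun i => (hxy i).le⟩
  | succ k ih =>
    -- Apply the induction hypothesis to the shifted sequence `X (i + 1)` and prepend `π 0 (y 0)`.
    intro X _ π hπ hlift x hx yₖ
    obtain ⟨y, hy, hyk, hxy⟩ :=
      ih (X := fun i => X (i + 1)) (fun i => hπ (i + 1)) (fun i => hlift (i + 1))
        (x := fun i => x (i + 1)) (fun i => hx (i + 1)) yₖ
    refine ⟨fun | 0 => π 0 (y 0) | i + 1 => y i, fun | 0 => rfl | i + 1 => hy i, hyk, ?_⟩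
    rintro (_ | i)
    · calc dist (x 0) (π 0 (y 0)) = dist (π 0 (x 1)) (π 0 (y 0)) := by rw [hx 0]
        _ ≤ dist (x 1) (y 0) := by simpa using (hπ 0).dist_le_mul (x 1) (y 0)
        _ ≤ dist (x (k + 1)) yₖ := hxy 0
    · exact hxy i

theorem stmt5_general
    (X : ℕ → Type*) [∀ i, MetricSpace (X i)] (star : ∀ i, X i)
    (π : ∀ i, X (i + 1) → X i)
    (hπsub : ∀ i, LipschitzWith 1 (π i) ∧
      ∀ (y y' : X i) (x : X (i + 1)), π i x = y →
        ∃ x', π i x' = y' ∧ dist x x' = dist y y')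
    (mem : (∀ i, X i) → Prop)
    (hmem : ∀ x, mem x ↔ (∀ i, π i (x (i + 1)) = x i) ∧
      BddAbove (range fun i => dist (star i) (x i)))
    (D : (∀ i, X i) → (∀ i, X i) → ℝ)
    (hD : ∀ x y, D x y = ⨆ i, dist (x i) (y i)) :
    ∀ k : ℕ,
      (∀ x y, mem x → mem y → dist (x k) (y k) ≤ 1 * D x y) ∧
      (∀ x, mem x → ∀ yk : X k,
        ∃ y, mem y ∧ y k = yk ∧ D x y = dist (x k) yk) := by
  have hbdd : ∀ x y, mem x → mem y → BddAbove (range fun i => dist (x i) (y i)) := by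
    intro x y hx hy
    refine bddAbove_range_dist_trans (b := star) ?_ ((hmem y).1 hy).2
    simpa only [dist_comm] using ((hmem x).1 hx).2
  intro k
  refine ⟨fun x y hx hy => ?_, fun x hx yk => ?_⟩
  · rw [hD, one_mul]
    exact le_ciSup (hbdd x y hx hy) k
  · obtain ⟨hx_comp, hx_bdd⟩ := (hmem x).1 hx
    obtain ⟨y, hy_comp, rfl, hxy⟩ := exists_compatible_extension k (fun i => (hπsub i).1)
      (fun i x y => (hπsub i).2 _ y x rfl) hx_comp yk
    have hy : mem y :=
      (hmem y).2 ⟨hy_comp, bddAbove_range_dist_trans hx_bdd ⟨_, forall_mem_range.2 hxy⟩⟩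
    refine ⟨y, hy, rfl, ?_⟩
    rw [hD]
    exact le_antisymm (ciSup_le hxy) (le_ciSup (hbdd x y hx hy) k)

/-- If `I = ℕ` and each `π_{i+1} : X_{i+1} → X_i` is a submetry, then every
projection `π^∞_k : X_∞ → X_k` is a submetry: it is 1-Lipschitz for the
supremum metric `d_∞`, and for every `x ∈ X_∞` over `x_k` and every
`y_k ∈ X_k` there is `y ∈ X_∞` with `y_k` as `k`-th coordinate and
`d_∞(x, y) = d_k(x_k, y_k)`. -/
theorem stmt5
    (X : ℕ → Type*) [∀ i, MetricSpace (X i)] (star : ∀ i, X i)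
    (π : ∀ i, X (i + 1) → X i)
    (hπstar : ∀ i, π i (star (i + 1)) = star i)
    (hπsub : ∀ i, LipschitzWith 1 (π i) ∧
      ∀ (y y' : X i) (x : X (i + 1)), π i x = y →
        ∃ x', π i x' = y' ∧ dist x x' = dist y y')
    (mem : (∀ i, X i) → Prop)
    (hmem : ∀ x, mem x ↔ (∀ i, π i (x (i + 1)) = x i) ∧
      BddAbove (range fun i => dist (star i) (x i)))
    (D : (∀ i, X i) → (∀ i, X i) → ℝ)
    (hD : ∀ x y, D x y = ⨆ i, dist (x i) (y i)) :
    ∀ k : ℕ,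
      (∀ x y, mem x → mem y → dist (x k) (y k) ≤ 1 * D x y) ∧
      (∀ x, mem x → ∀ yk : X k,
        ∃ y, mem y ∧ y k = yk ∧ D x y = dist (x k) yk) :=
  stmt5_general X star π hπsub mem hmem D hD
end

section
/- If each π_{i+1} : X_{i+1} → X_i is a base-point-preserving submetry with the unique path lifting property, then for every i ∈ ℕ the projection π^∞_i : X_∞ → X_i also has the unique path lifting property; moreover the lift of a rectifiable path γ : [a,b] → X_j starting at x ∈ (π^∞_j)⁻¹(γ(a)) is given coordinatewise by successive lifts in X_i for i > j and by projections for i < j. -/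
open Set

/-- A submetry. -/
def IsSubmetry {X Y : Type*} [MetricSpace X] [MetricSpace Y] (π : X → Y) : Prop :=
  LipschitzWith 1 π ∧
    ∀ (y y' : Y) (x : X), π x = y → ∃ x', π x' = y' ∧ dist x x' = dist y y'

/-- `γ'` is a lift of `γ : [a,b] → Y` along `π : X → Y`: it is continuous on
`[a,b]`, of finite length (variation), and projects to `γ`. -/
def LiftsOf {X Y : Type*} [PseudoEMetricSpace X] [PseudoEMetricSpace Y]
    (π : X → Y) (γ : ℝ → Y) (γ' : ℝ → X) (a b : ℝ) : Prop :=
  ContinuousOn γ' (Icc a b) ∧ eVariationOn γ' (Icc a b) ≠ ⊤ ∧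
    ∀ t ∈ Icc a b, π (γ' t) = γ t

/-- The unique path lifting property: every rectifiable path `γ : [a,b] → Y`
lifts, from every prescribed point of the fiber over `γ a`, to a unique
continuous finite-length path `γ'` projecting to `γ`, with
`L(γ') ≤ L(γ)`. -/
def HasUniquePathLifting {X Y : Type*} [PseudoEMetricSpace X] [PseudoEMetricSpace Y]
    (π : X → Y) : Prop :=
  ∀ a b : ℝ, a ≤ b → ∀ γ : ℝ → Y, ContinuousOn γ (Icc a b) →
    eVariationOn γ (Icc a b) ≠ ⊤ → ∀ x : X, π x = γ a →
      ∃ γ' : ℝ → X, LiftsOf π γ γ' a b ∧ γ' a = x ∧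
        eVariationOn γ' (Icc a b) ≤ eVariationOn γ (Icc a b) ∧
        ∀ η : ℝ → X, LiftsOf π γ η a b → η a = x → ∀ t ∈ Icc a b, η t = γ' t

/-- The product `∏ i, X i`, as a carrier for the supremum extended distance. -/
def Lim (X : ℕ → Type*) : Type _ := ∀ i, X i

/-- The supremum extended distance on `∏ i, X i`. -/
noncomputable instance Lim.instPseudoEMetricSpace (X : ℕ → Type*)
    [∀ i, PseudoEMetricSpace (X i)] : PseudoEMetricSpace (Lim X) where
  edist x y := ⨆ i, edist (x i) (y i)
  edist_self x := by simp
  edist_comm x y := by simp [edist_comm]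
  edist_triangle x y z := by
    refine iSup_le fun i => (edist_triangle (x i) (y i) (z i)).trans ?_
    exact add_le_add (le_iSup (fun i => edist (x i) (y i)) i)
      (le_iSup (fun i => edist (y i) (z i)) i)

/-- The points of the inverse limit `X_∞`: compatible sequences at bounded
distance from the base point. -/
def memLim (X : ℕ → Type*) [∀ i, PseudoEMetricSpace (X i)]
    (star : ∀ i, X i) (π : ∀ i, X (i + 1) → X i) (x : Lim X) : Prop :=
  (∀ i, π i (x (i + 1)) = x i) ∧ (⨆ i, edist (star i) (x i)) ≠ ⊤


/-!
Project `γ : ℝ → X j` down to `X 0` and lift it successively to `X 1`, `X 2`, … starting from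
the coordinates of the given point of `X_∞`. By uniqueness of lifts the first `j` of these are the
projections of `γ`, and every lift of `γ` to `X_∞` has exactly these coordinates. Every lift is
no longer than `γ` on every subinterval, so all coordinates are dominated by the variation of `γ`
at once; since `γ` is continuous of finite length, this makes the assembled path continuous for
the supremum metric and no longer than `γ`.
-/

open scoped ENNReal

section Variation

variable {α E F : Type*} [LinearOrder α] [PseudoEMetricSpace E] [PseudoEMetricSpace F]

theorem LipschitzWith.eVariationOn_comp_le {f : E → F} (hf : LipschitzWith 1 f) (g : α → E)
    (s : Set α) : eVariationOn (f ∘ g) s ≤ eVariationOn g s := by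
  simpa using hf.lipschitzOnWith.comp_eVariationOn_le (mapsTo_univ g s)

theorem eVariationOn_Icc_le_of_edist_le {f : α → F} {g : α → E} {a b : α}
    (h : ∀ s ∈ Icc a b, ∀ t ∈ Icc a b, s ≤ t → edist (f s) (f t) ≤ eVariationOn g (Icc s t)) :
    eVariationOn f (Icc a b) ≤ eVariationOn g (Icc a b) := by
  refine iSup_le fun ⟨n, u, hu, us⟩ => ?_
  calc ∑ k ∈ Finset.range n, edist (f (u (k + 1))) (f (u k))
      ≤ ∑ k ∈ Finset.range n, eVariationOn g (Icc (u k) (u (k + 1))) :=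
        Finset.sum_le_sum fun k _ =>
          edist_comm (f _) (f _) ▸ h _ (us k) _ (us (k + 1)) (hu k.le_succ)
    _ = eVariationOn g (Icc (u 0) (u n)) := eVariationOn.sum' g hu
    _ ≤ eVariationOn g (Icc a b) := eVariationOn.mono g (Icc_subset_Icc (us 0).1 (us n).2)

theorem continuousOn_Icc_of_edist_le [TopologicalSpace α] [OrderTopology α] {f : α → F}
    {g : α → E} {a b : α} (hgc : ContinuousOn g (Icc a b)) (hgv : BoundedVariationOn g (Icc a b))
    (h : ∀ s ∈ Icc a b, ∀ t ∈ Icc a b, s ≤ t → edist (f s) (f t) ≤ eVariationOn g (Icc s t)) :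
    ContinuousOn f (Icc a b) := by
  intro c hc
  have hleft := hgv.tendsto_eVariationOn_Icc_zero_left (hgc c hc |>.mono inter_subset_left)
  have hright := hgv.tendsto_eVariationOn_Icc_zero_right c (hgc c hc |>.mono inter_subset_left)
  refine tendsto_iff_edist_tendsto_0.2 <| tendsto_of_tendsto_of_tendsto_of_le_of_le'
    tendsto_const_nhds (by simpa using hleft.add hright) (.of_forall fun _ => zero_le) ?_
  filter_upwards [self_mem_nhdsWithin] with t ht
  rcases le_total t c with htc | hct
  · rw [inter_eq_right.2 (Icc_subset_Icc ht.1 hc.2)]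
    exact (h t ht c hc htc).trans le_self_add
  · rw [inter_eq_right.2 (Icc_subset_Icc hc.1 ht.2), edist_comm]
    exact (h c hc t ht hct).trans le_add_self

end Variation

section PathLifting

variable {E F : Type*} [PseudoEMetricSpace E] [PseudoEMetricSpace F] {p : E → F}
  {γ γ' : ℝ → F} {η η' : ℝ → E} {a b s t : ℝ}

theorem LiftsOf.mono (h : LiftsOf p γ η a b) (has : a ≤ s) (htb : t ≤ b) : LiftsOf p γ η s t :=
  have hsub : Icc s t ⊆ Icc a b := Icc_subset_Icc has htb
  ⟨h.1.mono hsub, ne_top_of_le_ne_top h.2.1 (eVariationOn.mono η hsub),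
    fun u hu => h.2.2 u (hsub hu)⟩

theorem LiftsOf.congr (h : LiftsOf p γ η a b) (hγ : EqOn γ γ' (Icc a b)) : LiftsOf p γ' η a b :=
  ⟨h.1, h.2.1, fun t ht => (h.2.2 t ht).trans (hγ ht)⟩

theorem LiftsOf.of_lipschitzWith {X : Type*} [PseudoEMetricSpace X] {q : X → E} {Γ : ℝ → X}
    (hq : LipschitzWith 1 q) (hΓc : ContinuousOn Γ (Icc a b))
    (hΓv : BoundedVariationOn Γ (Icc a b)) (hp : ∀ t ∈ Icc a b, p (q (Γ t)) = γ t) :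
    LiftsOf p γ (q ∘ Γ) a b :=
  ⟨hq.continuous.comp_continuousOn hΓc, hq.comp_boundedVariationOn hΓv, hp⟩

open Classical in
/-- The lift of `γ` from `x` when one exists, and the constant path at `x` otherwise. -/
noncomputable def pathLift (p : E → F) (γ : ℝ → F) (a b : ℝ) (x : E) : ℝ → E :=
  if h : ∃ η, LiftsOf p γ η a b ∧ η a = x then h.choose else fun _ => x

namespace HasUniquePathLifting

theorem liftsOf_pathLift (hp : HasUniquePathLifting p) (hab : a ≤ b)
    (hγc : ContinuousOn γ (Icc a b)) (hγv : BoundedVariationOn γ (Icc a b)) {x : E}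
    (hx : p x = γ a) :
    LiftsOf p γ (pathLift p γ a b x) a b ∧ pathLift p γ a b x a = x := by
  obtain ⟨η, hη, hηa, -⟩ := hp a b hab γ hγc hγv x hx
  have h : ∃ η, LiftsOf p γ η a b ∧ η a = x := ⟨η, hη, hηa⟩
  rw [pathLift, dif_pos h]
  exact h.choose_spec

theorem eqOn_of_liftsOf (hp : HasUniquePathLifting p) (hγc : ContinuousOn γ (Icc a b))
    (hγv : BoundedVariationOn γ (Icc a b))
    (hη : LiftsOf p γ η a b) (hη' : LiftsOf p γ η' a b) (ha : η a = η' a) :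
    EqOn η η' (Icc a b) := by
  intro t ht
  have hab : a ≤ b := ht.1.trans ht.2
  obtain ⟨ζ, -, -, -, huniq⟩ := hp a b hab γ hγc hγv (η a) (hη.2.2 a ⟨le_rfl, hab⟩)
  exact (huniq η hη rfl t ht).trans (huniq η' hη' ha.symm t ht).symm

/-- On `[s, t]`, `η` is the unique lift of `γ` from `η s`, to which the length bound of
`HasUniquePathLifting` applies. -/
theorem eVariationOn_le_of_liftsOf (hp : HasUniquePathLifting p) (hγc : ContinuousOn γ (Icc a b))
    (hγv : BoundedVariationOn γ (Icc a b)) (hη : LiftsOf p γ η a b) (has : a ≤ s) (htb : t ≤ b) :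
    eVariationOn η (Icc s t) ≤ eVariationOn γ (Icc s t) := by
  rcases lt_or_ge t s with hts | hst
  · simp [Icc_eq_empty_of_lt hts]
  have hsub : Icc s t ⊆ Icc a b := Icc_subset_Icc has htb
  have hγc' : ContinuousOn γ (Icc s t) := hγc.mono hsub
  have hγv' : BoundedVariationOn γ (Icc s t) := hγv.mono hsub
  obtain ⟨ζ, hζ, hζs, hζv, -⟩ :=
    hp s t hst γ hγc' hγv' (η s) (hη.2.2 s ⟨has, hst.trans htb⟩)
  calc eVariationOn η (Icc s t)
      = eVariationOn ζ (Icc s t) :=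
        eVariationOn.eq_of_eqOn (hp.eqOn_of_liftsOf hγc' hγv' (hη.mono has htb) hζ hζs.symm)
    _ ≤ eVariationOn γ (Icc s t) := hζv

end HasUniquePathLifting

end PathLifting

section InverseSequence

variable {X : ℕ → Type*} (π : ∀ i, X (i + 1) → X i)

/-- The bonding map `X j → X i`, `π i ∘ ⋯ ∘ π (j - 1)`, for `i ≤ j`. -/
def projDown {i j : ℕ} (h : i ≤ j) : X j → X i :=
  Nat.decreasingInduction (motive := fun i _ => X j → X i) (fun k _ f => π k ∘ f) id h

theorem projDown_self (j : ℕ) : projDown π (le_refl j) = id :=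
  Nat.decreasingInduction_self _ _

theorem projDown_of_succ_le {i j : ℕ} (h : i + 1 ≤ j) (h' : i ≤ j) :
    projDown π h' = π i ∘ projDown π h :=
  Nat.decreasingInduction_succ_left _ _ h h'

theorem projDown_apply_of_compat {y : ∀ i, X i} (hy : ∀ i, π i (y (i + 1)) = y i) {i j : ℕ}
    (h : i ≤ j) : projDown π h (y j) = y i := by
  induction h using Nat.decreasingInduction with
  | self => rw [projDown_self, id]
  | of_succ k hk ih => rw [projDown_of_succ_le π hk, Function.comp_apply, ih, hy]

theorem lipschitzWith_projDown [∀ i, PseudoEMetricSpace (X i)] {π : ∀ i, X (i + 1) → X i}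
    (hπ : ∀ i, LipschitzWith 1 (π i)) {i j : ℕ} (h : i ≤ j) : LipschitzWith 1 (projDown π h) := by
  induction h using Nat.decreasingInduction with
  | self => rw [projDown_self]; exact LipschitzWith.id
  | of_succ k hk ih => rw [projDown_of_succ_le π hk]; simpa using (hπ k).comp ih

variable [∀ i, PseudoEMetricSpace (X i)]

theorem Lim.edist_le_iff {x y : Lim X} {r : ℝ≥0∞} :
    edist x y ≤ r ↔ ∀ i, edist (x i) (y i) ≤ r :=
  iSup_le_iff

theorem Lim.edist_apply_le (x y : Lim X) (i : ℕ) : edist (x i) (y i) ≤ edist x y :=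
  Lim.edist_le_iff.1 le_rfl i

abbrev InverseLimit (X : ℕ → Type*) [∀ i, PseudoEMetricSpace (X i)] (star : ∀ i, X i)
    (π : ∀ i, X (i + 1) → X i) : Type _ :=
  {x : Lim X // memLim X star π x}

variable {star : ∀ i, X i} {π}

theorem InverseLimit.lipschitzWith_apply (i : ℕ) :
    LipschitzWith 1 fun x : InverseLimit X star π => x.1 i :=
  LipschitzWith.of_edist_le fun x y => Lim.edist_apply_le x.1 y.1 i

theorem memLim_of_edist_ne_top {x y : Lim X} (hx : memLim X star π x)
    (hy : ∀ i, π i (y (i + 1)) = y i) (hxy : edist x y ≠ ⊤) : memLim X star π y :=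
  ⟨hy, ne_top_of_le_ne_top (ENNReal.add_ne_top.2 ⟨hx.2, hxy⟩)
    (edist_triangle (α := Lim X) star x y)⟩

theorem InverseLimit.liftsOf_apply_succ {Γ : ℝ → InverseLimit X star π} {a b : ℝ}
    (hΓc : ContinuousOn Γ (Icc a b)) (hΓv : BoundedVariationOn Γ (Icc a b)) (i : ℕ) :
    LiftsOf (π i) (fun t => (Γ t).1 i) (fun t => (Γ t).1 (i + 1)) a b :=
  LiftsOf.of_lipschitzWith (lipschitzWith_apply (i + 1)) hΓc hΓv fun t _ => (Γ t).2.1 i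

end InverseSequence

section LiftSeq

variable {X : ℕ → Type*} [∀ i, PseudoEMetricSpace (X i)]

noncomputable def liftSeq (π : ∀ i, X (i + 1) → X i) (a b : ℝ) (γ₀ : ℝ → X 0) (x : Lim X) :
    ∀ i, ℝ → X i
  | 0 => γ₀
  | i + 1 => pathLift (π i) (liftSeq π a b γ₀ x i) a b (x (i + 1))

variable {π : ∀ i, X (i + 1) → X i} (hπ : ∀ i, HasUniquePathLifting (π i)) {a b : ℝ}
  {γ₀ : ℝ → X 0} {x : Lim X} (hab : a ≤ b) (hγc : ContinuousOn γ₀ (Icc a b))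
  (hγv : BoundedVariationOn γ₀ (Icc a b)) (hx : ∀ i, π i (x (i + 1)) = x i) (hx₀ : x 0 = γ₀ a)
include hπ hab hγc hγv hx hx₀

theorem liftSeq_spec (i : ℕ) :
    ContinuousOn (liftSeq π a b γ₀ x i) (Icc a b) ∧ liftSeq π a b γ₀ x i a = x i ∧
      ∀ s t, a ≤ s → t ≤ b →
        eVariationOn (liftSeq π a b γ₀ x i) (Icc s t) ≤ eVariationOn γ₀ (Icc s t) := by
  induction i with
  | zero => exact ⟨hγc, hx₀.symm, fun _ _ _ _ => le_rfl⟩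
  | succ i ih =>
    obtain ⟨hc, ha, hv⟩ := ih
    have hv' : BoundedVariationOn (liftSeq π a b γ₀ x i) (Icc a b) :=
      ne_top_of_le_ne_top hγv (hv a b le_rfl le_rfl)
    obtain ⟨hlift, hstart⟩ := (hπ i).liftsOf_pathLift hab hc hv' ((hx i).trans ha.symm)
    exact ⟨hlift.1, hstart, fun s t has htb =>
      ((hπ i).eVariationOn_le_of_liftsOf hc hv' hlift has htb).trans (hv s t has htb)⟩

theorem liftsOf_liftSeq_succ (i : ℕ) :
    LiftsOf (π i) (liftSeq π a b γ₀ x i) (liftSeq π a b γ₀ x (i + 1)) a b := by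
  obtain ⟨hc, ha, hv⟩ := liftSeq_spec hπ hab hγc hγv hx hx₀ i
  exact ((hπ i).liftsOf_pathLift hab hc (ne_top_of_le_ne_top hγv (hv a b le_rfl le_rfl))
    ((hx i).trans ha.symm)).1

theorem eqOn_liftSeq_succ {i : ℕ} {η : ℝ → X (i + 1)}
    (hη : LiftsOf (π i) (liftSeq π a b γ₀ x i) η a b) (hηa : η a = x (i + 1)) :
    EqOn η (liftSeq π a b γ₀ x (i + 1)) (Icc a b) := by
  obtain ⟨hc, -, hv⟩ := liftSeq_spec hπ hab hγc hγv hx hx₀ i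
  exact (hπ i).eqOn_of_liftsOf hc (ne_top_of_le_ne_top hγv (hv a b le_rfl le_rfl)) hη
    (liftsOf_liftSeq_succ hπ hab hγc hγv hx hx₀ i)
    (hηa.trans (liftSeq_spec hπ hab hγc hγv hx hx₀ (i + 1)).2.1.symm)

theorem eqOn_liftSeq {η : ∀ i, ℝ → X i} (h₀ : EqOn (η 0) γ₀ (Icc a b))
    (hη : ∀ i, LiftsOf (π i) (η i) (η (i + 1)) a b) (hηa : ∀ i, η i a = x i) :
    ∀ i, EqOn (η i) (liftSeq π a b γ₀ x i) (Icc a b)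
  | 0 => h₀
  | i + 1 => eqOn_liftSeq_succ hπ hab hγc hγv hx hx₀
      ((hη i).congr (eqOn_liftSeq h₀ hη hηa i)) (hηa (i + 1))

theorem exists_inverseLimit_path_eq_liftSeq {star : ∀ i, X i} (hxmem : memLim X star π x) :
    ∃ Γ : ℝ → InverseLimit X star π, ContinuousOn Γ (Icc a b) ∧
      eVariationOn Γ (Icc a b) ≤ eVariationOn γ₀ (Icc a b) ∧
      ∀ t ∈ Icc a b, ∀ i, (Γ t).1 i = liftSeq π a b γ₀ x i t := by
  have spec := liftSeq_spec hπ hab hγc hγv hx hx₀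
  have hcompat (t : ℝ) (ht : t ∈ Icc a b) (i : ℕ) :
      π i (liftSeq π a b γ₀ x (i + 1) t) = liftSeq π a b γ₀ x i t :=
    (liftsOf_liftSeq_succ hπ hab hγc hγv hx hx₀ i).2.2 t ht
  have hedist (s : ℝ) (hs : s ∈ Icc a b) (t : ℝ) (ht : t ∈ Icc a b) (hst : s ≤ t) :
      edist (α := Lim X) (fun i => liftSeq π a b γ₀ x i s) (fun i => liftSeq π a b γ₀ x i t) ≤
        eVariationOn γ₀ (Icc s t) := Lim.edist_le_iff.2 fun i =>
    (eVariationOn.edist_le _ (left_mem_Icc.2 hst) (right_mem_Icc.2 hst)).trans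
      ((spec i).2.2 s t hs.1 ht.2)
  have hmem (t : Icc a b) : memLim X star π fun i => liftSeq π a b γ₀ x i t := by
    refine memLim_of_edist_ne_top hxmem (hcompat t t.2) (ne_top_of_le_ne_top hγv ?_)
    have hxa : x = fun i => liftSeq π a b γ₀ x i a := funext fun i => ((spec i).2.1).symm
    nth_rw 1 [hxa]
    exact (hedist a (left_mem_Icc.2 hab) t t.2 t.2.1).trans
      (eVariationOn.mono _ (Icc_subset_Icc le_rfl t.2.2))
  set Γ : ℝ → InverseLimit X star π := IccExtend hab fun t => ⟨_, hmem t⟩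
  have hΓ (t : ℝ) (ht : t ∈ Icc a b) (i : ℕ) : (Γ t).1 i = liftSeq π a b γ₀ x i t := by
    simp only [Γ, IccExtend_of_mem hab _ ht]
  have hΓedist (s : ℝ) (hs : s ∈ Icc a b) (t : ℝ) (ht : t ∈ Icc a b) (hst : s ≤ t) :
      edist (Γ s) (Γ t) ≤ eVariationOn γ₀ (Icc s t) := by
    simpa only [Subtype.edist_eq, funext (hΓ s hs), funext (hΓ t ht)] using hedist s hs t ht hst
  exact ⟨Γ, continuousOn_Icc_of_edist_le hγc hγv hΓedist,
    eVariationOn_Icc_le_of_edist_le hΓedist, hΓ⟩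

end LiftSeq

section Main

variable {X : ℕ → Type*} [∀ i, PseudoEMetricSpace (X i)] {π : ∀ i, X (i + 1) → X i}

/-- The projections of `γ` are lifts of each other as well, so by uniqueness they are the
successive lifts. -/
theorem liftSeq_eqOn_projDown (hπl : ∀ i, LipschitzWith 1 (π i))
    (hπ : ∀ i, HasUniquePathLifting (π i)) {j : ℕ} {a b : ℝ} {γ : ℝ → X j} {x : Lim X}
    (hab : a ≤ b) (hγc : ContinuousOn γ (Icc a b)) (hγv : BoundedVariationOn γ (Icc a b))
    (hx : ∀ i, π i (x (i + 1)) = x i) (hxj : x j = γ a) :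
    ∀ i (h : i ≤ j),
      EqOn (liftSeq π a b (projDown π j.zero_le ∘ γ) x i) (projDown π h ∘ γ) (Icc a b)
  | 0, _ => fun _ _ => rfl
  | i + 1, h => by
    have hγ₀c := (lipschitzWith_projDown hπl j.zero_le).continuous.comp_continuousOn hγc
    have hγ₀v := (lipschitzWith_projDown hπl j.zero_le).comp_boundedVariationOn hγv
    have hx₀ : x 0 = (projDown π j.zero_le ∘ γ) a := by
      rw [Function.comp_apply, ← hxj, projDown_apply_of_compat π hx]
    refine (eqOn_liftSeq_succ hπ hab hγ₀c hγ₀v hx hx₀ ?_ ?_).symm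
    · refine LiftsOf.of_lipschitzWith (lipschitzWith_projDown hπl h) hγc hγv fun t ht => ?_
      rw [← Function.comp_apply (f := π i), ← projDown_of_succ_le π h (Nat.le_of_succ_le h)]
      exact (liftSeq_eqOn_projDown hπl hπ hab hγc hγv hx hxj i _ ht).symm
    · rw [Function.comp_apply, ← hxj, projDown_apply_of_compat π hx]

theorem hasUniquePathLifting_inverseLimit_apply (hπl : ∀ i, LipschitzWith 1 (π i))
    (hπ : ∀ i, HasUniquePathLifting (π i)) {star : ∀ i, X i} (j : ℕ) :
    HasUniquePathLifting fun x : InverseLimit X star π => x.1 j := by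
  intro a b hab γ hγc hγv x hxj
  set γ₀ := projDown π j.zero_le ∘ γ
  have hγ₀c : ContinuousOn γ₀ (Icc a b) :=
    (lipschitzWith_projDown hπl _).continuous.comp_continuousOn hγc
  have hγ₀v : eVariationOn γ₀ (Icc a b) ≤ eVariationOn γ (Icc a b) :=
    (lipschitzWith_projDown hπl _).eVariationOn_comp_le γ _
  have hγ₀v' : BoundedVariationOn γ₀ (Icc a b) := ne_top_of_le_ne_top hγv hγ₀v
  have hx₀ : x.1 0 = γ₀ a :=
    (projDown_apply_of_compat π x.2.1 j.zero_le).symm.trans (congrArg _ hxj)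
  obtain ⟨Γ, hΓc, hΓv, hΓ⟩ :=
    exists_inverseLimit_path_eq_liftSeq hπ hab hγ₀c hγ₀v' x.2.1 hx₀ x.2
  have ha : a ∈ Icc a b := left_mem_Icc.2 hab
  refine ⟨Γ, ⟨hΓc, ne_top_of_le_ne_top hγv (hΓv.trans hγ₀v), fun t ht => ?_⟩, ?_,
    hΓv.trans hγ₀v, fun η hη hηa t ht => ?_⟩
  · exact (hΓ t ht j).trans <|
      (liftSeq_eqOn_projDown hπl hπ hab hγc hγv x.2.1 hxj j le_rfl ht).trans
        (congrFun (projDown_self π j) (γ t))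
  · exact Subtype.ext <| funext fun i =>
      (hΓ a ha i).trans (liftSeq_spec hπ hab hγ₀c hγ₀v' x.2.1 hx₀ i).2.1
  · have h₀ : EqOn (fun t => (η t).1 0) γ₀ (Icc a b) := fun t ht =>
      (projDown_apply_of_compat π (η t).2.1 j.zero_le).symm.trans (congrArg _ (hη.2.2 t ht))
    have hcoord := eqOn_liftSeq hπ hab hγ₀c hγ₀v' x.2.1 hx₀ h₀
      (InverseLimit.liftsOf_apply_succ hη.1 hη.2.1) fun i => by rw [hηa]
    exact Subtype.ext <| funext fun i => (hcoord i ht).trans (hΓ t ht i).symm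

end Main

theorem stmt11_general
    (X : ℕ → Type*) [∀ i, MetricSpace (X i)]
    (star : ∀ i, X i)
    (π : ∀ i, X (i + 1) → X i)
    (hπsub : ∀ i, IsSubmetry (π i))
    (hπlift : ∀ i, HasUniquePathLifting (π i)) :
    ∀ j : ℕ,
      HasUniquePathLifting
        (fun x : {x : Lim X // memLim X star π x} => x.1 j) ∧
      ∀ (a b : ℝ), a ≤ b → ∀ γ : ℝ → X j, ContinuousOn γ (Icc a b) →
        eVariationOn γ (Icc a b) ≠ ⊤ →
        ∀ Γ : ℝ → {x : Lim X // memLim X star π x},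
          LiftsOf (fun x : {x : Lim X // memLim X star π x} => x.1 j) γ Γ a b →
          ∀ i, LiftsOf (π i) (fun t => (Γ t).1 i) (fun t => (Γ t).1 (i + 1)) a b := fun j =>
  ⟨hasUniquePathLifting_inverseLimit_apply (fun i => (hπsub i).1) hπlift j,
    fun _ _ _ _ _ _ _ hΓ i => InverseLimit.liftsOf_apply_succ hΓ.1 hΓ.2.1 i⟩

/-- If each `π_{i+1} : X_{i+1} → X_i` is a base-point-preserving submetry with
the unique path lifting property, then each projection `π^∞_j : X_∞ → X_j`
has the unique path lifting property; moreover for any lift `Γ` of a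
rectifiable path `γ` in `X_j`, the coordinates of `Γ` are successive lifts
(and, by compatibility, projections in the coordinates below `j`). -/
theorem stmt11
    (X : ℕ → Type*) [∀ i, MetricSpace (X i)] [∀ i, Nonempty (X i)]
    (star : ∀ i, X i)
    (π : ∀ i, X (i + 1) → X i)
    (hπstar : ∀ i, π i (star (i + 1)) = star i)
    (hπsub : ∀ i, IsSubmetry (π i))
    (hπlift : ∀ i, HasUniquePathLifting (π i)) :
    ∀ j : ℕ,
      HasUniquePathLifting
        (fun x : {x : Lim X // memLim X star π x} => x.1 j) ∧
      ∀ (a b : ℝ), a ≤ b → ∀ γ : ℝ → X j, ContinuousOn γ (Icc a b) →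
        eVariationOn γ (Icc a b) ≠ ⊤ →
        ∀ Γ : ℝ → {x : Lim X // memLim X star π x},
          LiftsOf (fun x : {x : Lim X // memLim X star π x} => x.1 j) γ Γ a b →
          ∀ i, LiftsOf (π i) (fun t => (Γ t).1 i) (fun t => (Γ t).1 (i + 1)) a b :=
  stmt11_general X star π hπsub hπlift
end

section
/- There exists an inverse sequence of finite pointed metric spaces with base-point-preserving submetries as bonding maps that admits no inverse limit in the category of pointed metric spaces with base-point-preserving submetries as morphisms. -/
theorem IsSubmetry.surjective {X Y : Type*} [MetricSpace X] [MetricSpace Y] [Nonempty X]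
    {π : X → Y} (hπ : IsSubmetry π) : Function.Surjective π := fun y =>
  let x := Classical.arbitrary X
  (hπ.2 (π x) y x rfl).imp fun _ h => h.1

section DiscreteMetric

abbrev discreteMetric (α : Type*) [DecidableEq α] : MetricSpace α where
  dist x y := if x = y then 0 else 1
  dist_self x := by simp
  dist_comm x y := by simp [eq_comm]
  dist_triangle x y z := by
    by_cases hxy : x = y <;> by_cases hyz : y = z <;> by_cases hxz : x = z <;> simp_all
  eq_of_dist_eq_zero {x y} h := by
    by_contra hne
    simp [hne] at h

variable {α β : Type*} [DecidableEq α] [DecidableEq β]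

theorem discreteMetric_dist (x y : α) :
    letI := discreteMetric α; dist x y = if x = y then 0 else 1 := rfl

theorem isSubmetry_discreteMetric {f : α → β} (hf : Function.Surjective f) :
    @IsSubmetry α β (discreteMetric α) (discreteMetric β) f := by
  let := discreteMetric α
  let := discreteMetric β
  refine ⟨LipschitzWith.of_dist_le_mul fun x y => ?_, fun y y' x hx => ?_⟩
  · rw [discreteMetric_dist, discreteMetric_dist, NNReal.coe_one, one_mul]
    split_ifs with hfxy hxy <;> simp_all
  · by_cases hyy' : y = y'
    · exact ⟨x, hyy' ▸ hx, by simp [hyy']⟩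
    · obtain ⟨x', rfl⟩ := hf y'
      have hxx' : x ≠ x' := by rintro rfl; exact hyy' hx.symm
      exact ⟨x', rfl, by rw [discreteMetric_dist, discreteMetric_dist, if_neg hxx', if_neg hyy']⟩

end DiscreteMetric

noncomputable def truncate (n : ℕ) (e : ℕ∞) : Fin (n + 1) :=
  ⟨(min e n).toNat, Nat.lt_succ_of_le (ENat.toNat_le_of_le_natCast (min_le_right e n))⟩

theorem truncate_natCast_of_le {n i : ℕ} (h : i ≤ n) : (truncate n i : ℕ) = i := by
  simp [truncate, h]

@[simp]
theorem truncate_zero (n : ℕ) : truncate n 0 = 0 := by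
  ext
  simp [truncate]

theorem truncate_top (n : ℕ) : truncate n ⊤ = Fin.last n := by
  ext
  simp [truncate]

theorem truncate_truncate (n : ℕ) (e : ℕ∞) :
    truncate n ((truncate (n + 1) e : ℕ) : ℕ∞) = truncate n e := by
  have hfin : min e (n + 1 : ℕ) ≠ ⊤ := ne_top_of_le_ne_top (by simp) (min_le_right _ _)
  ext
  simp only [truncate, ENat.natCast_toNat hfin, min_assoc]
  congr 3
  simp

theorem truncate_comp_surjective {Y : Type*} {e : Y → ℕ∞} {n : ℕ}
    (he : ∀ i ≤ n, ∃ y, e y = i) : Function.Surjective (truncate n ∘ e) := fun j => by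
  have hj : (j : ℕ) ≤ n := Nat.lt_succ_iff.mp j.isLt
  obtain ⟨y, hy⟩ := he j hj
  exact ⟨y, Fin.ext (by simp [hy, truncate_natCast_of_le hj])⟩

/-- There exists an inverse sequence of finite pointed (nonempty) metric spaces
whose bonding maps are base-point-preserving submetries, which admits no
inverse limit in the category of pointed metric spaces with base-point-preserving
submetries as morphisms: no pointed metric space `L` with compatible
base-point-preserving submetries `p n : L → X n` can satisfy the universal
property of the inverse limit in this category. -/
theorem stmt14 :
    ∃ (X : ℕ → Type) (mX : ∀ n, MetricSpace (X n)) (_ : ∀ n, Finite (X n))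
      (_ : ∀ n, Nonempty (X n))
      (star : ∀ n, X n) (π : ∀ n, X (n + 1) → X n),
      (∀ n, π n (star (n + 1)) = star n) ∧
      (∀ n, @IsSubmetry (X (n + 1)) (X n) (mX (n + 1)) (mX n) (π n)) ∧
      ¬ ∃ (L : Type) (mL : MetricSpace L) (_ : Nonempty L) (l₀ : L)
          (p : ∀ n, L → X n),
          (∀ n, p n l₀ = star n) ∧
          (∀ n, @IsSubmetry L (X n) mL (mX n) (p n)) ∧
          (∀ n (x : L), π n (p (n + 1) x) = p n x) ∧
          (∀ (Y : Type) (mY : MetricSpace Y) (_ : Nonempty Y) (y₀ : Y)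
            (u : ∀ n, Y → X n),
            (∀ n, u n y₀ = star n) →
            (∀ n, @IsSubmetry Y (X n) mY (mX n) (u n)) →
            (∀ n (y : Y), π n (u (n + 1) y) = u n y) →
            ∃! v : Y → L, v y₀ = l₀ ∧ @IsSubmetry Y L mY mL v ∧
              ∀ n (y : Y), p n (v y) = u n y) := by
  refine ⟨fun n => Fin (n + 1), fun n => discreteMetric _, fun n => inferInstance,
    fun n => ⟨0⟩, fun n => 0, fun n j => truncate n (j : ℕ), fun n => ?_, fun n => ?_, ?_⟩
  · exact Fin.ext (truncate_natCast_of_le n.zero_le)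
  · exact isSubmetry_discreteMetric (truncate_comp_surjective (e := fun j : Fin (n + 2) => (j : ℕ))
      fun i hi => ⟨⟨i, by omega⟩, rfl⟩)
  · rintro ⟨L, mL, -, l₀, p, -, -, -, huniv⟩
    have cone {Y : Type} [DecidableEq Y] (y₀ : Y) (e : Y → ℕ∞) (he₀ : e y₀ = 0)
        (he : ∀ i : ℕ, ∃ y, e y = i) :=
      (huniv Y (discreteMetric Y) ⟨y₀⟩ y₀ (fun n => truncate n ∘ e)
        (fun n => by simp [he₀])
        (fun n => isSubmetry_discreteMetric (truncate_comp_surjective fun i _ => he i))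
        (fun n y => truncate_truncate n (e y))).exists
    obtain ⟨v, -, hv, hpv⟩ := cone (0 : ℕ) (↑) rfl fun i => ⟨i, rfl⟩
    obtain ⟨w, -, -, hpw⟩ := cone (0 : ℕ∞) id rfl fun i => ⟨i, rfl⟩
    let : MetricSpace ℕ := discreteMetric ℕ
    obtain ⟨i, hi⟩ := hv.surjective (w ⊤)
    have hlevel : truncate (i + 1) i = truncate (i + 1) ⊤ :=
      (hpv (i + 1) i).symm.trans (hi ▸ hpw (i + 1) ⊤)
    rw [truncate_top, Fin.ext_iff, truncate_natCast_of_le i.le_succ] at hlevel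
    simp at hlevel
end

section
/- Let (f_m) and (g_m) be sequences of Lipschitz functions on [0,1] with uniformly bounded Lipschitz constants that converge pointwise to f and g respectively. Then ∫_0^1 f_m dg_m converges to ∫_0^1 f dg. -/
/-!
Uniform Lipschitz bounds make the families equicontinuous, so on the compact interval `[0,1]`
pointwise convergence is uniform. Write `F_m G_m' = (F_m - f) G_m' + f G_m'`. The first term is
at most `C · sup |F_m - f|`. For the second, Lipschitz functions are absolutely continuous, so
integrating by parts moves the derivative onto `f`: `∫ f G_m' = [f G_m] - ∫ f' G_m`, and now only
the uniform convergence `G_m → g` against the bounded weight `f'` is needed.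
-/

open Set Filter intervalIntegral
open scoped Topology

theorem EquicontinuousOn.tendstoUniformlyOn_of_tendsto {ι X α : Type*} [TopologicalSpace X]
    [UniformSpace α] {F : ι → X → α} {f : X → α} {K : Set X} {l : Filter ι}
    (hK : IsCompact K) (hF : EquicontinuousOn F K)
    (h : ∀ x ∈ K, Tendsto (F · x) l (𝓝 (f x))) : TendstoUniformlyOn F f l K := by
  have := (EquicontinuousOn.tendsto_uniformOnFun_iff_pi' (𝔖 := {K}) (by simpa using hK)
    (by simpa using hF) l f).mpr ?_
  · rw [UniformOnFun.tendsto_iff_tendstoUniformlyOn] at this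
    exact this K rfl
  · rw [tendsto_pi_nhds]
    rintro ⟨x, hx⟩
    exact h x (by simpa using hx)

theorem tendstoUniformlyOn_of_tendsto_of_lipschitzWith {ι α β : Type*} [PseudoMetricSpace α]
    [PseudoMetricSpace β] {F : ι → α → β} {f : α → β} {K : NNReal} {s : Set α} {l : Filter ι}
    (hs : IsCompact s) (hF : ∀ i, LipschitzWith K (F i))
    (h : ∀ x ∈ s, Tendsto (F · x) l (𝓝 (f x))) : TendstoUniformlyOn F f l s :=
  ((LipschitzWith.uniformEquicontinuous F K hF).equicontinuous.equicontinuousOn s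
    ).tendstoUniformlyOn_of_tendsto hs h

theorem tendsto_intervalIntegral_sub_mul_of_tendstoUniformlyOn {ι : Type*} {l : Filter ι}
    {u φ : ι → ℝ → ℝ} {v : ℝ → ℝ} {a b C : ℝ}
    (hu : TendstoUniformlyOn u v l (uIcc a b)) (hφ : ∀ i t, ‖φ i t‖ ≤ C) :
    Tendsto (fun i => ∫ t in a..b, (u i t - v t) * φ i t) l (𝓝 0) := by
  rw [Metric.tendsto_nhds]
  intro ε hε
  set K := |C| * |b - a| + 1
  have hK : 0 < K := by positivity
  filter_upwards [Metric.tendstoUniformlyOn_iff.mp hu (ε / K) (by positivity)] with i hi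
  rw [dist_zero_right]
  calc ‖∫ t in a..b, (u i t - v t) * φ i t‖ ≤ ε / K * |C| * |b - a| := by
        refine norm_integral_le_of_norm_le_const fun t ht => ?_
        rw [norm_mul, ← dist_eq_norm, dist_comm]
        exact mul_le_mul (hi t (uIoc_subset_uIcc ht)).le ((hφ i t).trans (le_abs_self C))
          (norm_nonneg _) (by positivity)
    _ < ε := by
        rw [mul_assoc, div_mul_eq_mul_div, div_lt_iff₀ hK]
        nlinarith [mul_nonneg (abs_nonneg C) (abs_nonneg (b - a))]

/-- Integration by parts against a fixed pair `(f, g)`, arranged so that `u` and `v` only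
appear through `u - f`, `v - g` and the boundary values of `v`. -/
theorem AbsolutelyContinuousOnInterval.integral_mul_deriv_eq_sub_mul_deriv_add
    {u v f g : ℝ → ℝ} {a b : ℝ} (hu : ContinuousOn u (uIcc a b))
    (hv : AbsolutelyContinuousOnInterval v a b) (hf : AbsolutelyContinuousOnInterval f a b)
    (hg : ContinuousOn g (uIcc a b)) :
    ∫ t in a..b, u t * deriv v t = (∫ t in a..b, (u t - f t) * deriv v t)
      + (f b * v b - f a * v a - (∫ t in a..b, deriv f t * g t)
        - ∫ t in a..b, (v t - g t) * deriv f t) := by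
  have hv' := hv.intervalIntegrable_deriv
  have hf' := hf.intervalIntegrable_deriv
  have hu_split : ∫ t in a..b, u t * deriv v t
      = (∫ t in a..b, (u t - f t) * deriv v t) + ∫ t in a..b, f t * deriv v t := by
    rw [← integral_add (hv'.continuousOn_mul (g := fun t => u t - f t) (hu.sub hf.continuousOn))
      (hv'.continuousOn_mul hf.continuousOn)]
    simp only [← add_mul, sub_add_cancel]
  have hv_split : ∫ t in a..b, deriv f t * v t
      = (∫ t in a..b, deriv f t * g t) + ∫ t in a..b, (v t - g t) * deriv f t := by
    rw [← integral_add (hf'.mul_continuousOn hg)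
      (hf'.continuousOn_mul (g := fun t => v t - g t) (hv.continuousOn.sub hg))]
    congr 1 with t
    ring
  rw [hu_split, hf.integral_mul_deriv_eq_deriv_mul hv, hv_split]
  ring

/-- If `(f_m)` and `(g_m)` are sequences of Lipschitz functions on `[0,1]`
with uniformly bounded Lipschitz constants converging pointwise to (Lipschitz
functions) `f` and `g` respectively, then the Riemann–Stieltjes integrals
`∫_0^1 f_m dg_m = ∫_0^1 f_m(t) g_m'(t) dt` converge to
`∫_0^1 f dg = ∫_0^1 f(t) g'(t) dt`. -/
theorem stmt16 (F G : ℕ → ℝ → ℝ) (f g : ℝ → ℝ) (C : NNReal)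
    (hF : ∀ m, LipschitzWith C (F m))
    (hG : ∀ m, LipschitzWith C (G m))
    (hf : LipschitzWith C f) (hg : LipschitzWith C g)
    (hFf : ∀ t ∈ Icc (0:ℝ) 1, Tendsto (fun m => F m t) atTop (nhds (f t)))
    (hGg : ∀ t ∈ Icc (0:ℝ) 1, Tendsto (fun m => G m t) atTop (nhds (g t))) :
    Tendsto (fun m => ∫ t in (0:ℝ)..1, F m t * deriv (G m) t) atTop
      (nhds (∫ t in (0:ℝ)..1, f t * deriv g t)) := by
  have hI : uIcc (0:ℝ) 1 = Icc 0 1 := uIcc_of_le zero_le_one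
  have ac : ∀ {u : ℝ → ℝ}, LipschitzWith C u → AbsolutelyContinuousOnInterval u 0 1 :=
    fun hu => hu.lipschitzOnWith.absolutelyContinuousOnInterval
  have hFf' : Tendsto (fun m => ∫ t in (0:ℝ)..1, (F m t - f t) * deriv (G m) t) atTop (𝓝 0) :=
    tendsto_intervalIntegral_sub_mul_of_tendstoUniformlyOn
      (hI ▸ tendstoUniformlyOn_of_tendsto_of_lipschitzWith isCompact_Icc hF hFf)
      fun m _ => norm_deriv_le_of_lipschitz (hG m)
  have hGg' : Tendsto (fun m => ∫ t in (0:ℝ)..1, (G m t - g t) * deriv f t) atTop (𝓝 0) :=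
    tendsto_intervalIntegral_sub_mul_of_tendstoUniformlyOn (φ := fun _ => deriv f)
      (hI ▸ tendstoUniformlyOn_of_tendsto_of_lipschitzWith isCompact_Icc hG hGg)
      fun _ _ => norm_deriv_le_of_lipschitz hf
  have hbdry : Tendsto (fun m => f 1 * G m 1 - f 0 * G m 0) atTop (𝓝 (f 1 * g 1 - f 0 * g 0)) :=
    ((hGg 1 (by norm_num)).const_mul _).sub ((hGg 0 (by norm_num)).const_mul _)
  have hcont : ∀ {u : ℝ → ℝ}, LipschitzWith C u → ContinuousOn u (uIcc 0 1) :=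
    fun hu => hu.continuous.continuousOn
  rw [funext fun m => (ac (hG m)).integral_mul_deriv_eq_sub_mul_deriv_add (hcont (hF m)) (ac hf)
      (hcont hg), (ac hg).integral_mul_deriv_eq_sub_mul_deriv_add (hcont hf) (ac hf) (hcont hg)]
  simpa using hFf'.add ((hbdry.sub_const _).sub hGg')
end

section
/- Let X be a topological tree equipped with a group structure such that all left translations x ↦ g·x and all right translations x ↦ x·g are continuous. If X contains more than one point, then X is homeomorphic to ℝ. -/
open Set

def IsArcBetween {X : Type*} [TopologicalSpace X] (A : Set X) (x y : X) : Prop :=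
  ∃ h : (Icc (0:ℝ) 1) ≃ₜ A,
    (h ⟨0, by norm_num⟩ : X) = x ∧ (h ⟨1, by norm_num⟩ : X) = y

section TreeBasics

variable {X : Type*} [TopologicalSpace X]

/-- A function form of arcs: `γ` restricted to `[0,1]` is an injective path from `x` to `y`. -/
def ArcFn (γ : ℝ → X) (x y : X) : Prop :=
  Continuous γ ∧ Set.InjOn γ (Icc 0 1) ∧ γ 0 = x ∧ γ 1 = y

namespace ArcFn

variable {γ : ℝ → X} {x y : X}

theorem cont (h : ArcFn γ x y) : Continuous γ := h.1
theorem injOn (h : ArcFn γ x y) : Set.InjOn γ (Icc 0 1) := h.2.1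
theorem src (h : ArcFn γ x y) : γ 0 = x := h.2.2.1
theorem tgt (h : ArcFn γ x y) : γ 1 = y := h.2.2.2

theorem ne (h : ArcFn γ x y) : x ≠ y := by
  intro hxy
  have h0 : (0:ℝ) ∈ Icc (0:ℝ) 1 := by norm_num
  have h1 : (1:ℝ) ∈ Icc (0:ℝ) 1 := by norm_num
  have : (0:ℝ) = 1 := h.injOn h0 h1 (by rw [h.src, h.tgt, hxy])
  norm_num at this

theorem src_mem (h : ArcFn γ x y) : x ∈ γ '' Icc 0 1 :=
  ⟨0, by norm_num, h.src⟩

theorem tgt_mem (h : ArcFn γ x y) : y ∈ γ '' Icc 0 1 :=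
  ⟨1, by norm_num, h.tgt⟩

theorem isArcBetween [T2Space X] (h : ArcFn γ x y) : IsArcBetween (γ '' Icc 0 1) x y := by
  set f : Icc (0:ℝ) 1 → (γ '' Icc 0 1) :=
    fun t => ⟨γ t, mem_image_of_mem _ t.2⟩ with hf
  have hcont : Continuous f := Continuous.subtype_mk (h.cont.comp continuous_subtype_val) _
  have hbij : Function.Bijective f := by
    constructor
    · intro a b hab
      exact Subtype.ext (h.injOn a.2 b.2 (congrArg Subtype.val hab))
    · rintro ⟨z, t, ht, rfl⟩
      exact ⟨⟨t, ht⟩, rfl⟩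
  refine ⟨Continuous.homeoOfEquivCompactToT2 (f := Equiv.ofBijective f hbij) hcont, ?_, ?_⟩
  · show (f ⟨0, _⟩ : X) = x
    simp [hf, h.src]
  · show (f ⟨1, _⟩ : X) = y
    simp [hf, h.tgt]

end ArcFn

theorem IsArcBetween.arcFn {A : Set X} {x y : X} (h : IsArcBetween A x y) :
    ∃ γ : ℝ → X, ArcFn γ x y ∧ γ '' Icc 0 1 = A := by
  obtain ⟨e, h0, h1⟩ := h
  refine ⟨fun t => e (projIcc 0 1 zero_le_one t), ⟨?_, ?_, ?_, ?_⟩, ?_⟩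
  · exact continuous_subtype_val.comp (e.continuous.comp continuous_projIcc)
  · intro s hs t ht hst
    simp only [projIcc_of_mem _ hs, projIcc_of_mem _ ht] at hst
    have h2 := e.injective (Subtype.ext hst)
    have h3 := congrArg Subtype.val h2
    have hps : (projIcc (0:ℝ) 1 zero_le_one s : ℝ) = s :=
      congrArg Subtype.val (projIcc_of_mem _ hs)
    have hpt : (projIcc (0:ℝ) 1 zero_le_one t : ℝ) = t :=
      congrArg Subtype.val (projIcc_of_mem _ ht)
    change s = t at h3
    exact h3
  · show (e (projIcc (0:ℝ) 1 zero_le_one 0) : X) = x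
    rw [projIcc_of_mem _ (by norm_num : (0:ℝ) ∈ Icc (0:ℝ) 1)]
    exact h0
  · show (e (projIcc (0:ℝ) 1 zero_le_one 1) : X) = y
    rw [projIcc_of_mem _ (by norm_num : (1:ℝ) ∈ Icc (0:ℝ) 1)]
    exact h1
  · ext z
    constructor
    · rintro ⟨t, ht, rfl⟩
      exact Subtype.coe_prop _
    · intro hz
      refine ⟨(e.symm ⟨z, hz⟩ : Icc (0:ℝ) 1), Subtype.coe_prop _, ?_⟩
      show (e (projIcc (0:ℝ) 1 zero_le_one _) : X) = z
      rw [projIcc_val]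
      simp


variable (huniq : ∀ x y : X, x ≠ y → ∃! A : Set X, IsArcBetween A x y)

open Classical in
/-- The unique arc between two distinct points (junk value `{x}` if `x = y`). -/
noncomputable def arcSet (x y : X) : Set X :=
  if h : x = y then {x} else (huniq x y h).choose

theorem arcSet_spec {x y : X} (h : x ≠ y) : IsArcBetween (arcSet huniq x y) x y := by
  rw [arcSet, dif_neg h]
  exact (huniq x y h).choose_spec.1

theorem IsArcBetween.arcSet_eq {A : Set X} {x y : X} (hA : IsArcBetween A x y) (h : x ≠ y) :
    A = arcSet huniq x y := by
  rw [arcSet, dif_neg h]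
  exact (huniq x y h).choose_spec.2 A hA

theorem ArcFn.image_eq [T2Space X] {γ : ℝ → X} {x y : X} (hγ : ArcFn γ x y) :
    γ '' Icc 0 1 = arcSet huniq x y :=
  hγ.isArcBetween.arcSet_eq huniq hγ.ne

theorem arcSet_arcFn [T2Space X] {x y : X} (h : x ≠ y) :
    ∃ γ : ℝ → X, ArcFn γ x y ∧ γ '' Icc 0 1 = arcSet huniq x y :=
  (arcSet_spec huniq h).arcFn

theorem left_mem_arcSet [T2Space X] {x y : X} (h : x ≠ y) : x ∈ arcSet huniq x y := by
  obtain ⟨γ, hγ, him⟩ := arcSet_arcFn huniq h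
  rw [← him]; exact hγ.src_mem

theorem right_mem_arcSet [T2Space X] {x y : X} (h : x ≠ y) : y ∈ arcSet huniq x y := by
  obtain ⟨γ, hγ, him⟩ := arcSet_arcFn huniq h
  rw [← him]; exact hγ.tgt_mem

/-- Reparametrization of part of an injective path as an arc function. -/
theorem arcFn_reparam {γ : ℝ → X} {a b : ℝ} (hc : Continuous γ)
    (hi : InjOn γ (uIcc a b)) (hab : a ≠ b) :
    ArcFn (fun t => γ (a + t * (b - a))) (γ a) (γ b) ∧
      (fun t => γ (a + t * (b - a))) '' Icc 0 1 = γ '' uIcc a b := by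
  have hba : b - a ≠ 0 := sub_ne_zero.mpr (Ne.symm hab)
  set l : ℝ → ℝ := fun t => a + t * (b - a) with hl
  have hlc : Continuous l := by fun_prop
  have hmaps : ∀ t ∈ Icc (0:ℝ) 1, l t ∈ uIcc a b := by
    intro t ht
    simp only [hl]
    rcases le_or_gt a b with h | h
    · rw [uIcc_of_le h]
      constructor
      · nlinarith [mul_nonneg ht.1 (sub_nonneg.mpr h)]
      · nlinarith [mul_nonneg (sub_nonneg.mpr ht.2) (sub_nonneg.mpr h)]
    · rw [uIcc_of_ge h.le]
      constructor
      · nlinarith [mul_nonneg (sub_nonneg.mpr ht.2) (sub_nonneg.mpr h.le)]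
      · nlinarith [mul_nonneg ht.1 (sub_nonneg.mpr h.le)]
  have hsurj : ∀ z ∈ uIcc a b, ∃ t ∈ Icc (0:ℝ) 1, l t = z := by
    intro z hz
    refine ⟨(z - a) / (b - a), ⟨?_, ?_⟩, ?_⟩
    · rcases lt_or_gt_of_ne hab with h | h
      · rw [uIcc_of_le h.le] at hz
        exact div_nonneg (by linarith [hz.1]) (by linarith)
      · rw [uIcc_of_ge h.le] at hz
        rw [div_nonneg_iff]
        right
        exact ⟨by linarith [hz.2], by linarith⟩
    · rcases lt_or_gt_of_ne hab with h | h
      · rw [uIcc_of_le h.le] at hz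
        rw [div_le_one (by linarith)]
        linarith [hz.2]
      · rw [uIcc_of_ge h.le] at hz
        rw [div_le_one_iff]
        right; right
        exact ⟨by linarith, by linarith [hz.1]⟩
    · show a + (z - a) / (b - a) * (b - a) = z
      rw [div_mul_cancel₀ _ hba]; ring
  have hlinj : ∀ s t : ℝ, l s = l t → s = t := by
    intro s t hst
    simp only [hl] at hst
    have : s * (b - a) = t * (b - a) := by linarith
    exact mul_right_cancel₀ hba this
  have him : (fun t => γ (l t)) '' Icc 0 1 = γ '' uIcc a b := by
    apply Subset.antisymm
    · rintro z ⟨t, ht, rfl⟩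
      exact mem_image_of_mem γ (hmaps t ht)
    · rintro z ⟨w, hw, rfl⟩
      obtain ⟨t, ht, hlt⟩ := hsurj w hw
      exact ⟨t, ht, show γ (l t) = γ w from by rw [hlt]⟩
  refine ⟨⟨hc.comp hlc, ?_, ?_, ?_⟩, him⟩
  · intro s hs t ht hst
    exact hlinj s t (hi (hmaps s hs) (hmaps t ht) hst)
  · simp [hl]
  · simp [hl]

theorem ArcFn.subarc [T2Space X] {γ : ℝ → X} {x y : X} (hγ : ArcFn γ x y) {s t : ℝ}
    (hs : s ∈ Icc (0:ℝ) 1) (ht : t ∈ Icc (0:ℝ) 1) (hst : s ≠ t) :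
    γ '' uIcc s t = arcSet huniq (γ s) (γ t) := by
  have hsub : uIcc s t ⊆ Icc 0 1 := by
    rw [uIcc_eq_union]
    rintro z (hz | hz)
    · exact ⟨le_trans hs.1 hz.1, le_trans hz.2 ht.2⟩
    · exact ⟨le_trans ht.1 hz.1, le_trans hz.2 hs.2⟩
  obtain ⟨h1, h2⟩ := arcFn_reparam hγ.cont (hγ.injOn.mono hsub) hst
  rw [← h2]
  exact h1.image_eq huniq

theorem arcSet_symm [T2Space X] {x y : X} (h : x ≠ y) :
    arcSet huniq x y = arcSet huniq y x := by
  obtain ⟨γ, hγ, him⟩ := arcSet_arcFn huniq h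
  have h10 : (1:ℝ) ≠ 0 := by norm_num
  have hi : InjOn γ (uIcc (1:ℝ) 0) := by
    rw [show uIcc (1:ℝ) 0 = Icc 0 1 by rw [uIcc_of_ge]; norm_num]
    exact hγ.injOn
  obtain ⟨h1, h2⟩ := arcFn_reparam hγ.cont hi h10
  rw [hγ.src, hγ.tgt] at h1
  have := h1.image_eq huniq
  rw [h2] at this
  rw [← this, show uIcc (1:ℝ) 0 = Icc 0 1 by rw [uIcc_of_ge]; norm_num, him]

/-- The arc between two points of an arc is contained in that arc. -/
theorem arcSet_between_subset [T2Space X] {x y z w : X} (hxy : x ≠ y)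
    (hz : z ∈ arcSet huniq x y) (hw : w ∈ arcSet huniq x y) (hzw : z ≠ w) :
    arcSet huniq z w ⊆ arcSet huniq x y := by
  obtain ⟨γ, hγ, him⟩ := arcSet_arcFn huniq hxy
  rw [← him] at hz hw
  obtain ⟨s, hs, rfl⟩ := hz
  obtain ⟨t, ht, rfl⟩ := hw
  have hst : s ≠ t := fun h => hzw (by rw [h])
  rw [← hγ.subarc huniq hs ht hst, ← him]
  exact image_mono (f := γ) (by
    rw [uIcc_eq_union]
    rintro u (hu | hu)
    · exact ⟨le_trans hs.1 hu.1, le_trans hu.2 ht.2⟩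
    · exact ⟨le_trans ht.1 hu.1, le_trans hu.2 hs.2⟩)



/-- Joining two arcs: there is an arc from `x` to `y` inside the union of an arc from
`x` to `m` and an arc from `m` to `y`. -/
theorem arcFn_join [T2Space X] {γ₁ γ₂ : ℝ → X} {x m y : X}
    (h1 : ArcFn γ₁ x m) (h2 : ArcFn γ₂ m y) (hxy : x ≠ y) :
    ∃ δ : ℝ → X, ArcFn δ x y ∧ δ '' Icc 0 1 ⊆ γ₁ '' Icc 0 1 ∪ γ₂ '' Icc 0 1 := by
  set T : Set ℝ := {t | t ∈ Icc (0:ℝ) 1 ∧ γ₂ t ∈ γ₁ '' Icc 0 1} with hT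
  have hTcl : IsClosed T := by
    have : IsClosed (γ₁ '' Icc 0 1) := (isCompact_Icc.image h1.cont).isClosed
    exact IsClosed.inter isClosed_Icc (this.preimage h2.cont)
  have hT0 : (0:ℝ) ∈ T := ⟨by norm_num, by rw [h2.src, ← h1.tgt]; exact ⟨1, by norm_num, rfl⟩⟩
  have hTcomp : IsCompact T := isCompact_Icc.of_isClosed_subset hTcl (fun t ht => ht.1)
  have hTne : T.Nonempty := ⟨0, hT0⟩
  set t₀ : ℝ := sSup T with ht₀def
  have ht₀T : t₀ ∈ T := hTcomp.sSup_mem hTne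
  have ht₀max : ∀ t ∈ T, t ≤ t₀ := fun t ht => le_csSup hTcomp.bddAbove ht
  obtain ⟨s₀, hs₀mem, hs₀⟩ := ht₀T.2
  -- γ₁ s₀ = γ₂ t₀
  rcases eq_or_lt_of_le (ht₀T.1.2 : t₀ ≤ 1) with ht₀1 | ht₀1
  · -- t₀ = 1 : y is on the first arc; take a subarc of γ₁
    have hy : γ₁ s₀ = y := by rw [hs₀, ht₀1, h2.tgt]
    have hs₀0 : (0:ℝ) ≠ s₀ := by
      intro h; rw [← h] at hy; rw [h1.src] at hy; exact hxy hy
    have hsub : uIcc (0:ℝ) s₀ ⊆ Icc 0 1 := by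
      rw [uIcc_of_le hs₀mem.1]
      exact Icc_subset_Icc le_rfl hs₀mem.2
    obtain ⟨hδ, hδim⟩ := arcFn_reparam h1.cont (h1.injOn.mono hsub) hs₀0
    rw [h1.src, hy] at hδ
    refine ⟨_, hδ, ?_⟩
    rw [hδim]
    exact fun z hz => Or.inl (image_mono (f := γ₁) hsub hz)
  · rcases eq_or_lt_of_le (hs₀mem.1 : (0:ℝ) ≤ s₀) with hs₀0 | hs₀0
    · -- s₀ = 0 : x is on the second arc; take a subarc of γ₂
      have hx : γ₂ t₀ = x := by rw [← hs₀, ← hs₀0, h1.src]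
      have ht₀1' : t₀ ≠ 1 := ne_of_lt ht₀1
      have hsub : uIcc t₀ 1 ⊆ Icc 0 1 := by
        rw [uIcc_of_le ht₀T.1.2]
        exact Icc_subset_Icc ht₀T.1.1 le_rfl
      obtain ⟨hδ, hδim⟩ := arcFn_reparam h2.cont (h2.injOn.mono hsub) ht₀1'
      rw [hx, h2.tgt] at hδ
      refine ⟨_, hδ, ?_⟩
      rw [hδim]
      exact fun z hz => Or.inr (image_mono (f := γ₂) hsub hz)
    · -- main case: concatenate
      have ht₀mem : t₀ ∈ Icc (0:ℝ) 1 := ht₀T.1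
      set δ : ℝ → X := fun t =>
        if t ≤ 1/2 then γ₁ (2 * s₀ * t) else γ₂ (t₀ + (2 * t - 1) * (1 - t₀)) with hδdef
      have harg1 : ∀ t : ℝ, 0 ≤ t → t ≤ 1/2 → 2 * s₀ * t ∈ Icc (0:ℝ) 1 := by
        intro t h0 h2'
        constructor
        · positivity
        · nlinarith [hs₀mem.2]
      have harg2 : ∀ t : ℝ, 1/2 ≤ t → t ≤ 1 → t₀ + (2 * t - 1) * (1 - t₀) ∈ Icc (0:ℝ) 1 := by
        intro t h2' h1'
        constructor
        · nlinarith [ht₀mem.1, ht₀mem.2]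
        · nlinarith [ht₀mem.1, ht₀mem.2]
      have hcont : Continuous δ := by
        rw [hδdef]
        apply Continuous.if_le
        · exact h1.cont.comp (by fun_prop)
        · exact h2.cont.comp (by fun_prop)
        · exact continuous_id
        · exact continuous_const
        · intro t ht
          rw [ht]
          rw [show 2 * s₀ * (1/2 : ℝ) = s₀ by ring,
            show t₀ + (2 * (1/2:ℝ) - 1) * (1 - t₀) = t₀ by ring]
          exact hs₀
      have hinj : InjOn δ (Icc 0 1) := by
        intro u hu v hv huv
        have key : ∀ a : ℝ, a ∈ Icc (0:ℝ) 1 → ¬(a ≤ 1/2) → δ a ∉ γ₁ '' Icc 0 1 := by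
          intro a ha ha2 hmem
          have hta : t₀ + (2 * a - 1) * (1 - t₀) ∈ T := by
            refine ⟨harg2 a (by linarith [not_le.mp ha2]) ha.2, ?_⟩
            have : δ a = γ₂ (t₀ + (2 * a - 1) * (1 - t₀)) := by
              rw [hδdef]; simp only [if_neg ha2]
            rw [← this]; exact hmem
          have hle := ht₀max _ hta
          nlinarith [not_le.mp ha2]
        by_cases hu2 : u ≤ 1/2 <;> by_cases hv2 : v ≤ 1/2
        · have heq : γ₁ (2 * s₀ * u) = γ₁ (2 * s₀ * v) := by
            have e1 : δ u = γ₁ (2 * s₀ * u) := by rw [hδdef]; simp only [if_pos hu2]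
            have e2 : δ v = γ₁ (2 * s₀ * v) := by rw [hδdef]; simp only [if_pos hv2]
            rw [← e1, ← e2, huv]
          have := h1.injOn (harg1 u hu.1 hu2) (harg1 v hv.1 hv2) heq
          have hs₀ne : s₀ ≠ 0 := ne_of_gt hs₀0
          field_simp at this
          tauto
        · exfalso
          apply key v hv hv2
          rw [← huv]
          have e1 : δ u = γ₁ (2 * s₀ * u) := by rw [hδdef]; simp only [if_pos hu2]
          rw [e1]
          exact ⟨2 * s₀ * u, harg1 u hu.1 hu2, rfl⟩
        · exfalso
          apply key u hu hu2
          rw [huv]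
          have e1 : δ v = γ₁ (2 * s₀ * v) := by rw [hδdef]; simp only [if_pos hv2]
          rw [e1]
          exact ⟨2 * s₀ * v, harg1 v hv.1 hv2, rfl⟩
        · have heq : γ₂ (t₀ + (2 * u - 1) * (1 - t₀)) = γ₂ (t₀ + (2 * v - 1) * (1 - t₀)) := by
            have e1 : δ u = γ₂ (t₀ + (2 * u - 1) * (1 - t₀)) := by
              rw [hδdef]; simp only [if_neg hu2]
            have e2 : δ v = γ₂ (t₀ + (2 * v - 1) * (1 - t₀)) := by
              rw [hδdef]; simp only [if_neg hv2]
            rw [← e1, ← e2, huv]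
          have := h2.injOn (harg2 u (by linarith [not_le.mp hu2]) hu.2)
            (harg2 v (by linarith [not_le.mp hv2]) hv.2) heq
          nlinarith [this]
      have hsrc : δ 0 = x := by
        rw [hδdef]
        simp only [if_pos (by norm_num : (0:ℝ) ≤ 1/2)]
        rw [show 2 * s₀ * (0:ℝ) = 0 by ring, h1.src]
      have htgt : δ 1 = y := by
        rw [hδdef]
        simp only [if_neg (by norm_num : ¬((1:ℝ) ≤ 1/2))]
        rw [show t₀ + (2 * (1:ℝ) - 1) * (1 - t₀) = 1 by ring, h2.tgt]
      refine ⟨δ, ⟨hcont, hinj, hsrc, htgt⟩, ?_⟩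
      rintro z ⟨t, ht, rfl⟩
      by_cases h : t ≤ 1/2
      · left
        rw [hδdef]; simp only [if_pos h]
        exact ⟨2 * s₀ * t, harg1 t ht.1 h, rfl⟩
      · right
        rw [hδdef]; simp only [if_neg h]
        exact ⟨t₀ + (2 * t - 1) * (1 - t₀), harg2 t (by linarith [not_le.mp h]) ht.2, rfl⟩


theorem arcSet_subset_join [T2Space X] {γ₁ γ₂ : ℝ → X} {x m y : X}
    (h1 : ArcFn γ₁ x m) (h2 : ArcFn γ₂ m y) (hxy : x ≠ y) :
    arcSet huniq x y ⊆ γ₁ '' Icc 0 1 ∪ γ₂ '' Icc 0 1 := by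
  obtain ⟨δ, hδ, hsub⟩ := arcFn_join h1 h2 hxy
  rw [← hδ.image_eq huniq]
  exact hsub

theorem arcSet_subset_join3 [T2Space X] {γ₁ γ₂ γ₃ : ℝ → X} {x a b y : X}
    (h1 : ArcFn γ₁ x a) (h2 : ArcFn γ₂ a b) (h3 : ArcFn γ₃ b y)
    (hxb : x ≠ b) (hxy : x ≠ y) :
    arcSet huniq x y ⊆ γ₁ '' Icc 0 1 ∪ γ₂ '' Icc 0 1 ∪ γ₃ '' Icc 0 1 := by
  obtain ⟨δ, hδ, hsub⟩ := arcFn_join h1 h2 hxb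
  intro z hz
  rcases arcSet_subset_join huniq hδ h3 hxy hz with hz' | hz'
  · exact Or.inl (hsub hz')
  · exact Or.inr hz'

/-- A continuous left inverse for an arc function, defined on the arc. -/
theorem ArcFn.exists_inverse [T2Space X] {γ : ℝ → X} {x y : X} (hγ : ArcFn γ x y) :
    ∃ ρ : X → ℝ, ContinuousOn ρ (γ '' Icc 0 1) ∧ ∀ w ∈ Icc (0:ℝ) 1, ρ (γ w) = w := by
  classical
  set f : Icc (0:ℝ) 1 → (γ '' Icc 0 1) := fun t => ⟨γ t, mem_image_of_mem _ t.2⟩ with hf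
  have hcont : Continuous f := Continuous.subtype_mk (hγ.cont.comp continuous_subtype_val) _
  have hbij : Function.Bijective f := by
    constructor
    · intro a b hab
      exact Subtype.ext (hγ.injOn a.2 b.2 (congrArg Subtype.val hab))
    · rintro ⟨z, t, ht, rfl⟩
      exact ⟨⟨t, ht⟩, rfl⟩
  set e := Continuous.homeoOfEquivCompactToT2 (f := Equiv.ofBijective f hbij) hcont with he
  refine ⟨fun z => if h : z ∈ γ '' Icc 0 1 then (e.symm ⟨z, h⟩ : ℝ) else 0, ?_, ?_⟩
  · rw [continuousOn_iff_continuous_restrict]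
    have : (fun (z : γ '' Icc 0 1) => (e.symm z : ℝ)) =
        Set.restrict _ (fun z => if h : z ∈ γ '' Icc 0 1 then (e.symm ⟨z, h⟩ : ℝ) else 0) := by
      funext z
      exact (dif_pos z.2 (t := fun h => (e.symm ⟨(z : X), h⟩ : ℝ)) (e := fun _ => 0)).symm
    refine (congrArg Continuous this).mp ?_
    exact continuous_subtype_val.comp e.symm.continuous
  · intro w hw
    have hmem : γ w ∈ γ '' Icc 0 1 := mem_image_of_mem _ hw
    show (if h : γ w ∈ γ '' Icc 0 1 then (e.symm ⟨γ w, h⟩ : ℝ) else 0) = w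
    rw [dif_pos hmem]
    have : e ⟨w, hw⟩ = ⟨γ w, hmem⟩ := rfl
    rw [← this, Homeomorph.symm_apply_apply]

theorem subarc_of_injOn [T2Space X] {γ : ℝ → X} {u v : ℝ} (hc : Continuous γ)
    (hi : InjOn γ (uIcc u v)) (huv : u ≠ v) :
    γ '' uIcc u v = arcSet huniq (γ u) (γ v) := by
  obtain ⟨h1, h2⟩ := arcFn_reparam hc hi huv
  rw [← h2]
  exact h1.image_eq huniq

end TreeBasics

section Axis

variable {X : Type*} [TopologicalSpace X] [T2Space X] [Group X]

theorem axis_exists (huniq : ∀ x y : X, x ≠ y → ∃! A : Set X, IsArcBetween A x y)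
    (hleft : ∀ g : X, Continuous fun x => g * x) {g : X} (hg : g ≠ 1) :
    ∃ (d : X) (γ : ℝ → X), ArcFn γ d (g * d) ∧
      (γ '' Icc 0 1) ∩ ((g * ·) '' (γ '' Icc 0 1)) = {g * d} := by
  have nofix : ∀ z : X, g * z ≠ z := fun z h =>
    hg (mul_right_cancel (h.trans (one_mul z).symm))
  have h1g : (1:X) ≠ g := fun h => hg h.symm
  obtain ⟨γ, hγ, hA⟩ := arcSet_arcFn huniq h1g
  set A : Set X := γ '' Icc 0 1 with hAdef
  have hgg : g ≠ g * g := by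
    intro h
    exact hg (mul_left_cancel (a := g) (show g * g = g * 1 by rw [← h, mul_one]))
  have hBγ : ArcFn (fun u => g * γ u) g (g * g) :=
    ⟨(hleft g).comp hγ.cont, fun a ha b hb hab => hγ.injOn ha hb (mul_left_cancel hab),
      show g * γ 0 = g by rw [hγ.src, mul_one], show g * γ 1 = g * g by rw [hγ.tgt]⟩
  set B : Set X := (fun u => g * γ u) '' Icc 0 1 with hBdef
  have hBeq : ((g * ·) '' A) = B := by rw [hAdef, hBdef, image_image]
  have hgB : g ∈ B := ⟨0, by norm_num, show g * γ 0 = g by rw [hγ.src, mul_one]⟩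
  have hgA : g ∈ A := by rw [← hγ.tgt]; exact ⟨1, by norm_num, rfl⟩
  -- the sets of parameters mapping into the other arc
  set S1 : Set ℝ := {w | w ∈ Icc (0:ℝ) 1 ∧ γ w ∈ B} with hS1def
  set S2 : Set ℝ := {w | w ∈ Icc (0:ℝ) 1 ∧ g * γ w ∈ A} with hS2def
  have hS1cl : IsClosed S1 :=
    IsClosed.inter isClosed_Icc (((isCompact_Icc.image hBγ.cont).isClosed).preimage hγ.cont)
  have hS2cl : IsClosed S2 :=
    IsClosed.inter isClosed_Icc (((isCompact_Icc.image hγ.cont).isClosed).preimage hBγ.cont)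
  have hS1mem1 : (1:ℝ) ∈ S1 := ⟨by norm_num, by rw [hγ.tgt]; exact hgB⟩
  have hS2mem0 : (0:ℝ) ∈ S2 := ⟨by norm_num, by rw [hγ.src, mul_one]; exact hgA⟩
  have hconv1 : ∀ w ∈ S1, ∀ w' ∈ S1, Icc w w' ⊆ S1 := by
    intro w hw w' hw' u hu
    have hu01 : u ∈ Icc (0:ℝ) 1 := ⟨le_trans hw.1.1 hu.1, le_trans hu.2 hw'.1.2⟩
    rcases eq_or_ne w w' with h | hww'
    · have : u = w := le_antisymm (h ▸ hu.2) hu.1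
      rwa [this]
    · have hγne : γ w ≠ γ w' := fun h => hww' (hγ.injOn hw.1 hw'.1 h)
      have hmem : γ u ∈ γ '' uIcc w w' :=
        ⟨u, by rw [uIcc_of_le (le_trans hu.1 hu.2)]; exact hu, rfl⟩
      rw [hγ.subarc huniq hw.1 hw'.1 hww'] at hmem
      have hsub := arcSet_between_subset huniq hBγ.ne
        (by rw [← hBγ.image_eq huniq]; exact hw.2)
        (by rw [← hBγ.image_eq huniq]; exact hw'.2) hγne
      have := hsub hmem
      rw [← hBγ.image_eq huniq] at this
      exact ⟨hu01, this⟩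
  have hconv2 : ∀ w ∈ S2, ∀ w' ∈ S2, Icc w w' ⊆ S2 := by
    intro w hw w' hw' u hu
    have hu01 : u ∈ Icc (0:ℝ) 1 := ⟨le_trans hw.1.1 hu.1, le_trans hu.2 hw'.1.2⟩
    rcases eq_or_ne w w' with h | hww'
    · have : u = w := le_antisymm (h ▸ hu.2) hu.1
      rwa [this]
    · have hγne : g * γ w ≠ g * γ w' := fun h => hww' (hγ.injOn hw.1 hw'.1 (mul_left_cancel h))
      have hmem : g * γ u ∈ (fun u => g * γ u) '' uIcc w w' :=
        ⟨u, by rw [uIcc_of_le (le_trans hu.1 hu.2)]; exact hu, rfl⟩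
      rw [hBγ.subarc huniq hw.1 hw'.1 hww'] at hmem
      have hsub := arcSet_between_subset huniq hγ.ne
        (by rw [← hγ.image_eq huniq]; exact hw.2)
        (by rw [← hγ.image_eq huniq]; exact hw'.2) hγne
      have := hsub hmem
      rw [← hγ.image_eq huniq] at this
      exact ⟨hu01, this⟩
  have hS1comp : IsCompact S1 := isCompact_Icc.of_isClosed_subset hS1cl (fun w hw => hw.1)
  have hS2comp : IsCompact S2 := isCompact_Icc.of_isClosed_subset hS2cl (fun w hw => hw.1)
  set t : ℝ := sInf S1 with htdef
  set s : ℝ := sSup S2 with hsdef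
  have htS1 : t ∈ S1 := hS1comp.sInf_mem ⟨1, hS1mem1⟩
  have hsS2 : s ∈ S2 := hS2comp.sSup_mem ⟨0, hS2mem0⟩
  have hS1eq : S1 = Icc t 1 := by
    apply Subset.antisymm
    · exact fun w hw => ⟨csInf_le hS1comp.bddBelow hw, hw.1.2⟩
    · exact hconv1 t htS1 1 hS1mem1
  have hS2eq : S2 = Icc 0 s := by
    apply Subset.antisymm
    · exact fun w hw => ⟨hw.1.1, le_csSup hS2comp.bddAbove hw⟩
    · exact hconv2 0 hS2mem0 s hsS2
  obtain ⟨ρ, hρcont, hρ⟩ := hγ.exists_inverse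
  set φ : ℝ → ℝ := fun v => ρ (g * γ v) with hφdef
  have hφval : ∀ v ∈ S2, γ (φ v) = g * γ v ∧ φ v ∈ Icc (0:ℝ) 1 := by
    intro v hv
    obtain ⟨w, hwmem, hw⟩ := hv.2
    have : φ v = w := by rw [hφdef]; simp only [← hw]; exact hρ w hwmem
    rw [this, hw]
    exact ⟨rfl, hwmem⟩
  have hφS1 : ∀ v ∈ S2, φ v ∈ S1 := by
    intro v hv
    refine ⟨(hφval v hv).2, ?_⟩
    rw [(hφval v hv).1]
    exact ⟨v, hv.1, rfl⟩
  have hφnofix : ∀ v ∈ S2, φ v ≠ v := by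
    intro v hv h
    have := (hφval v hv).1
    rw [h] at this
    exact nofix (γ v) this.symm
  have hφ0 : φ 0 = 1 := by
    have h1 := (hφval 0 hS2mem0).1
    rw [hγ.src, mul_one, ← hγ.tgt] at h1
    exact hγ.injOn (hφval 0 hS2mem0).2 (by norm_num) h1
  have hφcont : ContinuousOn φ (Icc 0 s) := by
    apply ContinuousOn.comp hρcont (Continuous.continuousOn ((hleft g).comp hγ.cont))
    intro v hv
    rw [← hS2eq] at hv
    exact hv.2
  have hφinj : InjOn φ (Icc 0 s) := by
    intro a ha b hb hab
    rw [← hS2eq] at ha hb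
    have h1 := (hφval a ha).1
    have h2 := (hφval b hb).1
    rw [hab, h2] at h1
    exact hγ.injOn ha.1 hb.1 (mul_left_cancel h1.symm)
  rcases eq_or_lt_of_le (htS1.1.2 : t ≤ 1) with ht1 | ht1
  · -- t = 1 : basepoint 1 works
    refine ⟨1, γ, by rw [mul_one]; exact hγ, ?_⟩
    rw [mul_one]
    apply Subset.antisymm
    · rintro z ⟨hzA, hzB⟩
      obtain ⟨u, hu, rfl⟩ := hzA
      have hzB' : γ u ∈ B := by rw [← hBeq]; exact hzB
      have huS1 : u ∈ S1 := ⟨hu, hzB'⟩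
      rw [hS1eq, ← ht1] at huS1
      have : u = t := le_antisymm huS1.2 huS1.1
      rw [mem_singleton_iff, this, ht1, hγ.tgt]
    · intro z hz
      rw [mem_singleton_iff] at hz
      subst hz
      exact ⟨hgA, by rw [hBeq]; exact hgB⟩
  · -- t < 1 : move the basepoint to γ s
    have hγt : γ t ∈ B := htS1.2
    obtain ⟨v₀, hv₀mem, hv₀'⟩ := hγt
    have hv₀ : g * γ v₀ = γ t := hv₀'
    have hv₀S2 : v₀ ∈ S2 := ⟨hv₀mem, by rw [hv₀]; exact ⟨t, htS1.1, rfl⟩⟩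
    have hφv₀ : φ v₀ = t := by
      have h1 := hρ t htS1.1
      rw [hφdef]
      show ρ (g * γ v₀) = t
      rw [hv₀]
      exact h1
    have hs0 : 0 ≤ s := hsS2.1.1
    have hφs1 : φ s ≤ 1 := ((hφval s hsS2).2).2
    have hanti : StrictAntiOn φ (Icc 0 s) :=
      ContinuousOn.strictAntiOn_of_injOn_Icc hs0 (by rw [hφ0]; exact hφs1) hφcont hφinj
    have hv₀s : v₀ = s := by
      have hle : v₀ ≤ s := (hS2eq ▸ hv₀S2).2
      rcases eq_or_lt_of_le hle with h | h
      · exact h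
      · exfalso
        have h1 : φ s < φ v₀ := hanti (hS2eq ▸ hv₀S2) (hS2eq ▸ hsS2) h
        rw [hφv₀] at h1
        have h2 := hφS1 s hsS2
        rw [hS1eq] at h2
        linarith [h2.1]
    have hφs : φ s = t := by rw [← hv₀s]; exact hφv₀
    have hst : s < t := by
      by_contra hle
      push_neg at hle
      have ht0 : (0:ℝ) ≤ t := htS1.1.1
      have htS2 : t ∈ S2 := by rw [hS2eq]; exact ⟨ht0, hle⟩
      have hFt : 0 < φ t - t := by
        have h1 : t ≤ φ t := by
          have h2 := hφS1 t htS2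
          rw [hS1eq] at h2
          exact h2.1
        have h2 : φ t ≠ t := hφnofix t htS2
        have := lt_of_le_of_ne h1 (Ne.symm h2)
        linarith
      have hFs : φ s - s < 0 := by
        have h1 : φ s ≤ s := hφs ▸ hle
        have h2 : φ s ≠ s := hφnofix s hsS2
        have := lt_of_le_of_ne h1 h2
        linarith
      have hsubts : Icc t s ⊆ Icc 0 s := Icc_subset_Icc ht0 le_rfl
      have hcont' : ContinuousOn (fun v => φ v - v) (Icc t s) :=
        (hφcont.mono hsubts).sub continuousOn_id
      have hIVT := intermediate_value_Icc' hle hcont'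
      obtain ⟨v, hvmem, hv⟩ := hIVT ⟨hFs.le, hFt.le⟩
      have hfix : φ v = v := by
        have : φ v - v = 0 := hv
        linarith
      exact hφnofix v (hS2eq ▸ (hsubts hvmem)) hfix
    have hstne : s ≠ t := ne_of_lt hst
    have hsmem01 : s ∈ Icc (0:ℝ) 1 := hsS2.1
    have htmem01 : t ∈ Icc (0:ℝ) 1 := htS1.1
    have hsubst : uIcc s t ⊆ Icc (0:ℝ) 1 := by
      rw [uIcc_of_le hst.le]
      exact Icc_subset_Icc hsmem01.1 htmem01.2
    obtain ⟨hJ, hJim⟩ := arcFn_reparam hγ.cont (hγ.injOn.mono hsubst) hstne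
    have hgd : g * γ s = γ t := by rw [← hφs]; exact ((hφval s hsS2).1).symm
    refine ⟨γ s, _, by rw [hgd]; exact hJ, ?_⟩
    rw [hJim]
    have him2 : ((g * ·) '' (γ '' uIcc s t)) = (fun u => g * γ u) '' uIcc s t :=
      image_image _ _ _
    apply Subset.antisymm
    · rintro z ⟨hz1, hz2⟩
      obtain ⟨u, hu, rfl⟩ := hz1
      rw [him2] at hz2
      obtain ⟨v, hv, hveq⟩ := hz2
      have huS1 : u ∈ S1 := ⟨hsubst hu, ⟨v, hsubst hv, hveq⟩⟩
      rw [hS1eq] at huS1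
      have hu' : u ≤ t := by
        rw [uIcc_of_le hst.le] at hu
        exact hu.2
      have huT : u = t := le_antisymm hu' huS1.1
      rw [mem_singleton_iff, huT, ← hgd]
    · intro z hz
      rw [mem_singleton_iff] at hz
      subst hz
      constructor
      · rw [hgd]
        exact ⟨t, by rw [uIcc_of_le hst.le]; exact ⟨hst.le, le_rfl⟩, rfl⟩
      · exact ⟨γ s, ⟨s, by rw [uIcc_of_le hst.le]; exact ⟨le_rfl, hst.le⟩, rfl⟩, rfl⟩

end Axis


section Line

variable {X : Type*} [TopologicalSpace X] [T2Space X] [Group X]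

/-- The `g`-invariant line through the special arc `γ`. -/
noncomputable def lineMap (g : X) (γ : ℝ → X) : ℝ → X :=
  fun t => g ^ (⌊t⌋ : ℤ) * γ (Int.fract t)

variable {g x₀ : X} {γ : ℝ → X}

theorem lineMap_add_int (t : ℝ) (n : ℤ) :
    lineMap g γ (t + n) = g ^ n * lineMap g γ t := by
  unfold lineMap
  rw [Int.floor_add_intCast, Int.fract_add_intCast, add_comm, zpow_add, mul_assoc]

theorem lineMap_piece (hJ : ArcFn γ x₀ (g * x₀)) (n : ℤ) :
    ∀ t ∈ Icc (n:ℝ) (n+1), lineMap g γ t = g ^ n * γ (t - n) := by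
  intro t ht
  rcases lt_or_eq_of_le ht.2 with h | h
  · unfold lineMap
    rw [Int.fract, show ⌊t⌋ = n from Int.floor_eq_iff.mpr ⟨ht.1, h⟩]
  · rw [show t = ((n+1 : ℤ) : ℝ) by push_cast; linarith]
    unfold lineMap
    rw [Int.floor_intCast, Int.fract_intCast, hJ.src]
    have : ((n+1 : ℤ) : ℝ) - n = 1 := by push_cast; ring
    rw [this, hJ.tgt, zpow_add_one, mul_assoc]

theorem lineMap_int (hJ : ArcFn γ x₀ (g * x₀)) (n : ℤ) :
    lineMap g γ (n : ℝ) = g ^ n * x₀ := by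
  unfold lineMap
  rw [Int.floor_intCast, Int.fract_intCast, hJ.src]

theorem lineMap_continuous (hJ : ArcFn γ x₀ (g * x₀))
    (hleft : ∀ h : X, Continuous fun z => h * z) : Continuous (lineMap g γ) := by
  apply LocallyFinite.continuous (f := fun n : ℤ => Icc (n:ℝ) (n+1))
  · intro x
    refine ⟨Ioo (x-1) (x+1), Ioo_mem_nhds (by linarith) (by linarith), ?_⟩
    apply Set.Finite.subset (Set.finite_Icc (⌈x-2⌉) (⌊x+1⌋))
    rintro n ⟨z, hz1, hz2⟩
    constructor
    · rw [Int.ceil_le]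
      push_cast
      linarith [hz1.2, hz2.1]
    · rw [Int.le_floor]
      push_cast
      linarith [hz1.1, hz2.2]
  · apply eq_univ_of_forall
    intro x
    exact mem_iUnion.mpr ⟨⌊x⌋, Int.floor_le x, (Int.lt_floor_add_one x).le⟩
  · exact fun n => isClosed_Icc
  · intro n
    apply ContinuousOn.congr (f := fun t => g ^ n * γ (t - n))
    · exact ((hleft (g ^ n)).comp (hJ.cont.comp (by fun_prop))).continuousOn
    · exact fun t ht => lineMap_piece hJ n t ht


theorem lineMap_injOn_int
    (huniq : ∀ x y : X, x ≠ y → ∃! A : Set X, IsArcBetween A x y)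
    (hleft : ∀ h : X, Continuous fun z => h * z)
    (hJ : ArcFn γ x₀ (g * x₀))
    (hO : (γ '' Icc 0 1) ∩ ((g * ·) '' (γ '' Icc 0 1)) = {g * x₀}) :
    ∀ N : ℤ, 0 ≤ N → InjOn (lineMap g γ) (Icc (0:ℝ) (N+1)) := by
  have hcont := lineMap_continuous hJ hleft
  set Γ := lineMap g γ with hΓ
  set J := γ '' Icc 0 1 with hJdef
  have hpieceInj : ∀ n : ℤ, InjOn Γ (Icc (n:ℝ) (n+1)) := by
    intro n a ha b hb hab
    rw [hΓ, lineMap_piece hJ n a ha, lineMap_piece hJ n b hb] at hab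
    have h1 := mul_left_cancel hab
    have h2 := hJ.injOn ⟨by linarith [ha.1], by linarith [ha.2]⟩
      ⟨by linarith [hb.1], by linarith [hb.2]⟩ h1
    linarith
  have hpieceIm : ∀ n : ℤ, Γ '' (Icc (n:ℝ) (n+1)) = (fun z => g ^ n * z) '' J := by
    intro n
    apply Subset.antisymm
    · rintro z ⟨t, ht, rfl⟩
      rw [hΓ, lineMap_piece hJ n t ht]
      exact ⟨γ (t - n), ⟨t - n, ⟨by linarith [ht.1], by linarith [ht.2]⟩, rfl⟩, rfl⟩
    · rintro z ⟨w, ⟨u, hu, rfl⟩, rfl⟩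
      refine ⟨u + n, ⟨by linarith [hu.1], by linarith [hu.2]⟩, ?_⟩
      rw [hΓ, lineMap_piece hJ n (u + n) ⟨by linarith [hu.1], by linarith [hu.2]⟩]
      norm_num
  have hconsec : ∀ n : ℤ,
      ((fun z => g ^ n * z) '' J) ∩ ((fun z => g ^ (n+1) * z) '' J) = {g ^ (n+1) * x₀} := by
    intro n
    have hinj : Function.Injective (fun z : X => g ^ n * z) := fun a b h => mul_left_cancel h
    have hfun : (fun z : X => g ^ (n+1) * z) = (fun z : X => g ^ n * z) ∘ (fun z : X => g * z) := by
      funext z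
      simp only [Function.comp_apply]
      rw [zpow_add_one, mul_assoc]
    rw [hfun, image_comp, ← image_inter hinj, hO, image_singleton]
    rw [show g ^ (n+1) * x₀ = g ^ n * (g * x₀) by rw [zpow_add_one, mul_assoc]]
  have hΓint : ∀ n : ℤ, Γ (n : ℝ) = g ^ n * x₀ := fun n => lineMap_int hJ n
  intro N
  refine Int.le_induction (motive := fun n _ => InjOn Γ (Icc (0:ℝ) ((n:ℝ)+1))) ?_ ?_ N
  · intro a ha b hb hab
    have h0 : ((0:ℤ):ℝ) = 0 := by norm_num
    exact hpieceInj 0 (by rw [h0]; simpa using ha) (by rw [h0]; simpa using hb) hab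
  · intro N hN IH
    have hcast : ((N+1 : ℤ) : ℝ) = (N:ℝ) + 1 := by push_cast; ring
    have hN0 : (0:ℝ) ≤ (N:ℝ) := by exact_mod_cast hN
    rw [hcast]
    have hhigh : InjOn Γ (Icc ((N:ℝ)+1) ((N:ℝ)+2)) := by
      have := hpieceInj (N+1)
      rw [hcast] at this
      convert this using 2
      push_cast
      ring
    suffices H : ∀ a b : ℝ, a ∈ Icc 0 ((N:ℝ)+1+1) → b ∈ Icc 0 ((N:ℝ)+1+1) → a ≤ b →
        Γ a = Γ b → a = b by
      intro a ha b hb hab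
      rcases le_total a b with h | h
      · exact H a b ha hb h hab
      · exact (H b a hb ha h hab.symm).symm
    intro a b ha hb hle heq
    by_cases hbN : b ≤ (N:ℝ)+1
    · exact IH ⟨ha.1, le_trans hle hbN⟩ ⟨hb.1, hbN⟩ heq
    push_neg at hbN
    by_cases haN : (N:ℝ)+1 ≤ a
    · exact hhigh ⟨haN, by linarith [ha.2]⟩ ⟨hbN.le, by linarith [hb.2]⟩ heq
    push_neg at haN
    exfalso
    have hmemN1 : (N:ℝ)+1 ∈ Icc (0:ℝ) ((N:ℝ)+1) := ⟨by linarith, le_rfl⟩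
    have hbpiece : Γ b ∈ (fun z => g ^ (N+1) * z) '' J := by
      rw [← hpieceIm (N+1)]
      exact ⟨b, ⟨by rw [hcast]; linarith, by rw [hcast]; linarith [hb.2]⟩, rfl⟩
    by_cases haN2 : (N:ℝ) ≤ a
    · -- a in the second-to-last piece
      have hapiece : Γ a ∈ (fun z => g ^ N * z) '' J := by
        rw [← hpieceIm N]
        exact ⟨a, ⟨haN2, by linarith⟩, rfl⟩
      have h3 : Γ a ∈ ({g ^ (N+1) * x₀} : Set X) := by
        rw [← hconsec N]
        exact ⟨hapiece, heq ▸ hbpiece⟩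
      rw [mem_singleton_iff] at h3
      have h4 : Γ a = Γ ((N:ℝ)+1) := by
        rw [show ((N:ℝ)+1) = ((N+1:ℤ):ℝ) by rw [hcast], hΓint (N+1), h3]
      have := IH ⟨ha.1, haN.le⟩ hmemN1 h4
      linarith
    · -- a below the second-to-last piece : arc uniqueness argument
      push_neg at haN2
      have hΓa_ne : Γ a ≠ Γ ((N:ℝ)+1) := by
        intro h
        have := IH ⟨ha.1, haN.le⟩ hmemN1 h
        linarith
      have hΓb_ne : Γ ((N:ℝ)+1) ≠ Γ b := by
        intro h
        have h4 : Γ a = Γ ((N:ℝ)+1) := heq.trans h.symm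
        exact hΓa_ne h4
      have hanlt : a ≠ (N:ℝ)+1 := by linarith
      have hblt : (N:ℝ)+1 ≠ b := by linarith
      have hu1 : uIcc ((N:ℝ)+1) b = Icc ((N:ℝ)+1) b := uIcc_of_le hbN.le
      have hu2 : uIcc a ((N:ℝ)+1) = Icc a ((N:ℝ)+1) := uIcc_of_le (by linarith)
      have E1 : Γ '' uIcc ((N:ℝ)+1) b = arcSet huniq (Γ ((N:ℝ)+1)) (Γ b) := by
        apply subarc_of_injOn huniq hcont _ hblt
        rw [hu1]
        exact hhigh.mono (Icc_subset_Icc le_rfl (by linarith [hb.2]))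
      have E2 : Γ '' uIcc a ((N:ℝ)+1) = arcSet huniq (Γ a) (Γ ((N:ℝ)+1)) := by
        apply subarc_of_injOn huniq hcont _ hanlt
        rw [hu2]
        exact IH.mono (Icc_subset_Icc ha.1 le_rfl)
      have hEE : Γ '' uIcc ((N:ℝ)+1) b = Γ '' uIcc a ((N:ℝ)+1) := by
        rw [E1, E2, ← heq, arcSet_symm huniq hΓa_ne]
      have hmemN : Γ (N:ℝ) ∈ Γ '' uIcc a ((N:ℝ)+1) :=
        ⟨(N:ℝ), by rw [hu2]; exact ⟨haN2.le, by linarith⟩, rfl⟩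
      rw [← hEE] at hmemN
      have hsub2 : Γ '' uIcc ((N:ℝ)+1) b ⊆ (fun z => g ^ (N+1) * z) '' J := by
        rw [← hpieceIm (N+1), hu1]
        apply image_mono
        rw [hcast]
        exact Icc_subset_Icc le_rfl (by linarith [hb.2])
      have h1 : Γ (N:ℝ) ∈ (fun z => g ^ (N+1) * z) '' J := hsub2 hmemN
      have h2 : Γ (N:ℝ) ∈ (fun z => g ^ N * z) '' J := by
        rw [← hpieceIm N]
        exact ⟨(N:ℝ), ⟨le_rfl, by linarith⟩, rfl⟩
      have h3 : Γ (N:ℝ) ∈ ({g ^ (N+1) * x₀} : Set X) := by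
        rw [← hconsec N]
        exact ⟨h2, h1⟩
      rw [mem_singleton_iff, hΓint N] at h3
      apply hJ.ne
      apply mul_left_cancel (a := g ^ N)
      rw [h3, zpow_add_one, mul_assoc]


theorem lineMap_injective
    (huniq : ∀ x y : X, x ≠ y → ∃! A : Set X, IsArcBetween A x y)
    (hleft : ∀ h : X, Continuous fun z => h * z)
    (hJ : ArcFn γ x₀ (g * x₀))
    (hO : (γ '' Icc 0 1) ∩ ((g * ·) '' (γ '' Icc 0 1)) = {g * x₀}) :
    Function.Injective (lineMap g γ) := by
  intro a b hab
  obtain ⟨K, hK⟩ := exists_nat_gt (|a| ⊔ |b|)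
  have haK : |a| < K := lt_of_le_of_lt (le_max_left _ _) hK
  have hbK : |b| < K := lt_of_le_of_lt (le_max_right _ _) hK
  rw [abs_lt] at haK hbK
  have h2K : (0:ℤ) ≤ 2 * K := by positivity
  have hInj := lineMap_injOn_int huniq hleft hJ hO (2 * K) h2K
  have he : lineMap g γ (a + (K:ℤ)) = lineMap g γ (b + (K:ℤ)) := by
    rw [lineMap_add_int, lineMap_add_int, hab]
  have hmema : a + ((K:ℤ):ℝ) ∈ Icc (0:ℝ) ((((2*K:ℤ)):ℝ) + 1) := by
    constructor
    · push_cast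
      linarith [haK.1]
    · push_cast
      linarith [haK.2]
  have hmemb : b + ((K:ℤ):ℝ) ∈ Icc (0:ℝ) ((((2*K:ℤ)):ℝ) + 1) := by
    constructor
    · push_cast
      linarith [hbK.1]
    · push_cast
      linarith [hbK.2]
  have := hInj hmema hmemb he
  linarith

theorem lineMap_arcSet
    (huniq : ∀ x y : X, x ≠ y → ∃! A : Set X, IsArcBetween A x y)
    (hleft : ∀ h : X, Continuous fun z => h * z)
    (hJ : ArcFn γ x₀ (g * x₀))
    (hO : (γ '' Icc 0 1) ∩ ((g * ·) '' (γ '' Icc 0 1)) = {g * x₀})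
    {a b : ℝ} (hab : a ≠ b) :
    (lineMap g γ) '' uIcc a b = arcSet huniq (lineMap g γ a) (lineMap g γ b) :=
  subarc_of_injOn huniq (lineMap_continuous hJ hleft)
    ((lineMap_injective huniq hleft hJ hO).injOn) hab


theorem ArcFn.reverse {δ : ℝ → X} {a b : X} (hδ : ArcFn δ a b) :
    ArcFn (fun u => δ (1 - u)) b a ∧ (fun u => δ (1 - u)) '' Icc 0 1 = δ '' Icc 0 1 := by
  have hm : ∀ u : ℝ, u ∈ Icc (0:ℝ) 1 → 1 - u ∈ Icc (0:ℝ) 1 := by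
    intro u hu
    exact ⟨by linarith [hu.2], by linarith [hu.1]⟩
  refine ⟨⟨hδ.cont.comp (by fun_prop), ?_, ?_, ?_⟩, ?_⟩
  · intro p hp q hq hpq
    have := hδ.injOn (hm p hp) (hm q hq) hpq
    linarith
  · show δ (1 - 0) = b
    rw [show (1:ℝ) - 0 = 1 by ring, hδ.tgt]
  · show δ (1 - 1) = a
    rw [show (1:ℝ) - 1 = 0 by ring, hδ.src]
  · apply Subset.antisymm
    · rintro z ⟨t, ht, rfl⟩
      exact mem_image_of_mem δ (hm t ht)
    · rintro z ⟨t, ht, rfl⟩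
      refine ⟨1 - t, hm t ht, ?_⟩
      show δ (1 - (1 - t)) = δ t
      rw [show (1:ℝ) - (1 - t) = t by ring]

theorem ArcFn.lmul {G : Type*} [TopologicalSpace G] [Group G] {δ : ℝ → G} {a b : G}
    (hδ : ArcFn δ a b) (g : G) (hg : Continuous fun z : G => g * z) :
    ArcFn (fun u => g * δ u) (g * a) (g * b) ∧
      (fun u => g * δ u) '' Icc 0 1 = (fun z => g * z) '' (δ '' Icc 0 1) := by
  refine ⟨⟨hg.comp hδ.cont, fun p hp q hq hpq => hδ.injOn hp hq (mul_left_cancel hpq),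
    show g * δ 0 = g * a by rw [hδ.src], show g * δ 1 = g * b by rw [hδ.tgt]⟩, ?_⟩
  rw [image_image]

theorem lineMap_surjective
    (huniq : ∀ x y : X, x ≠ y → ∃! A : Set X, IsArcBetween A x y)
    (hleft : ∀ h : X, Continuous fun z => h * z)
    (hright : ∀ h : X, Continuous fun z => z * h)
    (hJ : ArcFn γ x₀ (g * x₀))
    (hO : (γ '' Icc 0 1) ∩ ((g * ·) '' (γ '' Icc 0 1)) = {g * x₀}) :
    Function.Surjective (lineMap g γ) := by
  have hcont := lineMap_continuous hJ hleft
  have hinj := lineMap_injective huniq hleft hJ hO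
  set Γ := lineMap g γ with hΓ
  have hg1 : g ≠ 1 := by
    intro h
    apply hJ.ne
    rw [h, one_mul]
  have nofix : ∀ z : X, g * z ≠ z := fun z h =>
    hg1 (mul_right_cancel (h.trans (one_mul z).symm))
  -- additivity
  have hadd : ∀ t : ℝ, ∀ m : ℤ, Γ (t + m) = g ^ m * Γ t := fun t m => lineMap_add_int t m
  have hadd1 : ∀ t : ℝ, Γ (t + 1) = g * Γ t := by
    intro t
    have := hadd t 1
    rw [zpow_one] at this
    rw [show t + 1 = t + ((1:ℤ):ℝ) by norm_num]
    exact this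
  -- right-translated lines
  have htrans : ∀ h : X, ∃ γh : ℝ → X, ArcFn γh (x₀ * h) (g * (x₀ * h)) ∧
      ((γh '' Icc 0 1) ∩ ((g * ·) '' (γh '' Icc 0 1)) = {g * (x₀ * h)}) ∧
      (∀ t, lineMap g γh t = Γ t * h) := by
    intro h
    have hrinj : Function.Injective (fun z : X => z * h) := fun p q hpq => mul_right_cancel hpq
    refine ⟨fun u => γ u * h,
      ⟨(hright h).comp hJ.cont, fun p hp q hq hpq => hJ.injOn hp hq (mul_right_cancel hpq),
        show γ 0 * h = x₀ * h by rw [hJ.src],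
        show γ 1 * h = g * (x₀ * h) by rw [hJ.tgt, mul_assoc]⟩, ?_, ?_⟩
    · have h1 : (fun u => γ u * h) '' Icc 0 1 = (fun z => z * h) '' (γ '' Icc 0 1) := by
        rw [image_image]
      have h2 : ((g * ·) '' ((fun u => γ u * h) '' Icc 0 1)) =
          (fun z => z * h) '' ((g * ·) '' (γ '' Icc 0 1)) := by
        rw [image_image, image_image, image_image]
        apply image_congr
        intro z _
        show g * (γ z * h) = g * γ z * h
        rw [mul_assoc]
      rw [h2, h1, ← image_inter hrinj, hO, image_singleton, mul_assoc]
    · intro t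
      show g ^ ⌊t⌋ * (γ (Int.fract t) * h) = g ^ ⌊t⌋ * γ (Int.fract t) * h
      rw [mul_assoc]
  -- image translation along segments
  have himtr : ∀ (Γ'' : ℝ → X), (∀ t : ℝ, ∀ m : ℤ, Γ'' (t + m) = g ^ m * Γ'' t) →
      ∀ (σ : ℝ) (n : ℤ), Γ'' '' Icc (σ + n) (σ + n + 1) =
        (fun z => g ^ n * z) '' (Γ'' '' Icc σ (σ + 1)) := by
    intro Γ'' ha σ n
    apply Subset.antisymm
    · rintro z ⟨t, ht, rfl⟩
      refine ⟨Γ'' (t - n), ⟨t - n, ⟨by linarith [ht.1], by linarith [ht.2]⟩, rfl⟩, ?_⟩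
      simp only
      rw [← ha (t - n) n]
      norm_num
    · rintro z ⟨w, ⟨t, ht, rfl⟩, rfl⟩
      exact ⟨t + n, ⟨by linarith [ht.1], by linarith [ht.2]⟩, ha t n⟩
  -- segment cover of the range
  have hcover : ∀ (Γ'' : ℝ → X) (σ : ℝ),
      range Γ'' = ⋃ n : ℤ, Γ'' '' Icc (σ + n) (σ + n + 1) := by
    intro Γ'' σ
    apply Subset.antisymm
    · rintro z ⟨t, rfl⟩
      refine mem_iUnion.mpr ⟨⌊t - σ⌋, t, ⟨?_, ?_⟩, rfl⟩
      · linarith [Int.floor_le (t - σ)]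
      · linarith [Int.lt_floor_add_one (t - σ)]
    · intro z hz
      obtain ⟨n, t, _, rfl⟩ := mem_iUnion.mp hz
      exact ⟨t, rfl⟩
  -- merging of lines that meet
  have hmerge : ∀ (γ' : ℝ → X) (x₀' : X), ArcFn γ' x₀' (g * x₀') →
      ((γ' '' Icc 0 1) ∩ ((g * ·) '' (γ' '' Icc 0 1)) = {g * x₀'}) →
      ∀ τ τ' : ℝ, Γ τ = lineMap g γ' τ' → range Γ = range (lineMap g γ') := by
    intro γ' x₀' hJ' hO' τ τ' heq
    set Γ' := lineMap g γ' with hΓ'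
    have hadd' : ∀ t : ℝ, ∀ m : ℤ, Γ' (t + m) = g ^ m * Γ' t := fun t m => lineMap_add_int t m
    have base : Γ '' Icc τ (τ + 1) = Γ' '' Icc (τ') (τ' + 1) := by
      have e1 : Γ '' uIcc τ (τ + 1) = arcSet huniq (Γ τ) (Γ (τ + 1)) :=
        lineMap_arcSet huniq hleft hJ hO (by linarith)
      have e2 : Γ' '' uIcc τ' (τ' + 1) = arcSet huniq (Γ' τ') (Γ' (τ' + 1)) :=
        lineMap_arcSet huniq hleft hJ' hO' (by linarith)
      have hend : Γ (τ + 1) = Γ' (τ' + 1) := by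
        rw [hadd1 τ, heq]
        have := hadd' τ' 1
        rw [zpow_one] at this
        rw [show τ' + 1 = τ' + ((1:ℤ):ℝ) by norm_num, this]
      rw [← uIcc_of_le (by linarith : τ ≤ τ + 1), ← uIcc_of_le (by linarith : τ' ≤ τ' + 1),
        e1, e2, heq, hend]
    have hseg : ∀ n : ℤ, Γ '' Icc (τ + n) (τ + n + 1) = Γ' '' Icc (τ' + n) (τ' + n + 1) := by
      intro n
      rw [himtr Γ hadd τ n, himtr Γ' hadd' τ' n, base]
    rw [hcover Γ τ, hcover Γ' τ']
    exact iUnion_congr hseg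
  -- arcs from points not on the line stay off the line
  have hS2 : ∀ y : X, y ∉ range Γ → arcSet huniq y (g * y) ∩ range Γ = ∅ := by
    intro y hy
    obtain ⟨γh, hJh, hOh, hvals⟩ := htrans ((Γ 0)⁻¹ * y)
    have hy0 : lineMap g γh 0 = y := by
      rw [hvals 0, mul_inv_cancel_left]
    have hy1 : lineMap g γh 1 = g * y := by
      have := lineMap_add_int (g := g) (γ := γh) 0 1
      rw [zpow_one] at this
      have h01 : (0:ℝ) + ((1:ℤ):ℝ) = 1 := by norm_num
      rw [h01] at this
      rw [this, hy0]
    have harc : arcSet huniq y (g * y) = lineMap g γh '' uIcc 0 1 := by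
      rw [lineMap_arcSet huniq hleft hJh hOh (by norm_num : (0:ℝ) ≠ 1), hy0, hy1]
    apply eq_empty_iff_forall_notMem.mpr
    rintro z ⟨hz1, τ, hτ⟩
    rw [harc] at hz1
    obtain ⟨τ', _, hτ'⟩ := hz1
    have hr := hmerge γh _ hJh hOh τ τ' (by rw [hτ, ← hτ'])
    apply hy
    rw [hr]
    exact ⟨0, hy0⟩
  -- main argument
  intro y
  by_contra hy'
  have hy : y ∉ range Γ := fun ⟨t, ht⟩ => hy' ⟨t, ht⟩
  have hq0 : Γ 0 ∈ range Γ := ⟨0, rfl⟩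
  set q : X := Γ 0 with hqdef
  have hqy : q ≠ y := fun h => hy (h ▸ hq0)
  obtain ⟨α, hα, hαim⟩ := arcSet_arcFn huniq hqy
  have harccl : IsClosed (arcSet huniq q y) := by
    rw [← hαim]
    exact (isCompact_Icc.image hα.cont).isClosed
  set R : Set ℝ := {r : ℝ | Γ r ∈ arcSet huniq q y} with hRdef
  have hRcl : IsClosed R := harccl.preimage hcont
  have hR0 : (0:ℝ) ∈ R := by
    show Γ 0 ∈ arcSet huniq q y
    exact left_mem_arcSet huniq hqy
  have hRconv : ∀ r ∈ R, ∀ r' ∈ R, uIcc r r' ⊆ R := by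
    intro r hr r' hr' p hp
    rcases eq_or_ne r r' with h | hne
    · rw [h, uIcc_self, mem_singleton_iff] at hp
      rwa [hp]
    · have hΓne : Γ r ≠ Γ r' := fun h => hne (hinj h)
      have h1 : Γ p ∈ Γ '' uIcc r r' := mem_image_of_mem Γ hp
      rw [lineMap_arcSet huniq hleft hJ hO hne] at h1
      exact arcSet_between_subset huniq hqy hr hr' hΓne h1
  -- coordinates on the arc
  have hw : ∀ r ∈ R, ∃ w, w ∈ Icc (0:ℝ) 1 ∧ α w = Γ r := by
    intro r hr
    have : Γ r ∈ arcSet huniq q y := hr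
    rw [← hαim] at this
    obtain ⟨w, hwm, hwe⟩ := this
    exact ⟨w, hwm, hwe⟩
  have hwmono : ∀ r r' w w', r ∈ uIcc 0 r' → Γ r = α w → Γ r' = α w' →
      w ∈ Icc (0:ℝ) 1 → w' ∈ Icc (0:ℝ) 1 → w ∈ uIcc 0 w' := by
    intro r r' w w' hr hw1 hw2 hwm hw'm
    rcases eq_or_ne r' 0 with h0 | hne0
    · rw [h0, uIcc_self, mem_singleton_iff] at hr
      have : α w = α 0 := by
        rw [← hw1, hr, hα.src, hqdef]
      have := hα.injOn hwm (by norm_num) this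
      rw [this]
      exact left_mem_uIcc
    · have hw'0 : w' ≠ 0 := by
        intro h
        apply hne0
        apply hinj
        rw [hw2, h, hα.src, hqdef]
      have e1 : Γ '' uIcc 0 r' = arcSet huniq q (α w') := by
        rw [lineMap_arcSet huniq hleft hJ hO (Ne.symm hne0), ← hΓ, ← hqdef, hw2]
      have e2 : α '' uIcc 0 w' = arcSet huniq q (α w') := by
        have := hα.subarc huniq (by norm_num : (0:ℝ) ∈ Icc (0:ℝ) 1) hw'm (Ne.symm hw'0)
        rwa [hα.src] at this
      have h1 : Γ r ∈ Γ '' uIcc 0 r' := mem_image_of_mem Γ hr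
      rw [e1, ← e2] at h1
      obtain ⟨w'', hw''m, hw''e⟩ := h1
      have hww : w'' = w := by
        apply hα.injOn _ hwm (by rw [hw''e, hw1])
        rcases le_total 0 w' with h | h
        · rw [uIcc_of_le h] at hw''m
          exact ⟨hw''m.1, le_trans hw''m.2 hw'm.2⟩
        · exact absurd (le_antisymm h hw'm.1) hw'0
      rw [← hww]
      exact hw''m
  -- unbounded rays lead to a fixed point
  have hunbdd : ∀ e : ℤ, (e = 1 ∨ e = -1) → (∀ n : ℕ, ((e * n : ℤ) : ℝ) ∈ R) → False := by
    intro e hee hall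
    have hwn : ∀ n : ℕ, ∃ w, w ∈ Icc (0:ℝ) 1 ∧ α w = Γ ((e * n : ℤ) : ℝ) := fun n =>
      hw _ (hall n)
    choose w hwmem hweq using hwn
    have hmono : Monotone w := by
      intro n m hnm
      have hr : ((e * n : ℤ) : ℝ) ∈ uIcc 0 ((e * m : ℤ) : ℝ) := by
        rcases hee with he | he <;> subst he
        · have h1 : ((1 * n : ℤ) : ℝ) = (n:ℝ) := by push_cast; ring
          have h2 : ((1 * m : ℤ) : ℝ) = (m:ℝ) := by push_cast; ring
          rw [h1, h2, uIcc_of_le (Nat.cast_nonneg m)]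
          exact ⟨Nat.cast_nonneg n, Nat.cast_le.mpr hnm⟩
        · have h1 : ((-1 * n : ℤ) : ℝ) = -(n:ℝ) := by push_cast; ring
          have h2 : ((-1 * m : ℤ) : ℝ) = -(m:ℝ) := by push_cast; ring
          rw [h1, h2, uIcc_of_ge (neg_nonpos.mpr (Nat.cast_nonneg m))]
          exact ⟨neg_le_neg (Nat.cast_le.mpr hnm), neg_nonpos.mpr (Nat.cast_nonneg n)⟩
      have := hwmono _ _ _ _ hr (hweq n).symm (hweq m).symm (hwmem n) (hwmem m)
      rw [uIcc_of_le (hwmem m).1] at this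
      exact this.2
    have hbdd : BddAbove (range w) := ⟨1, by rintro _ ⟨n, rfl⟩; exact (hwmem n).2⟩
    set p : ℝ := ⨆ n, w n with hpdef
    have htend : Filter.Tendsto w Filter.atTop (nhds p) := tendsto_atTop_ciSup hmono hbdd
    have h1 : Filter.Tendsto (fun n => α (w n)) Filter.atTop (nhds (α p)) :=
      (hα.cont.tendsto p).comp htend
    have hshift : ∀ n : ℕ, α (w (n + 1)) = g ^ e * α (w n) := by
      intro n
      rw [hweq, hweq]
      have hc : ((e * (n+1 : ℕ) : ℤ) : ℝ) = ((e * n : ℤ) : ℝ) + (e : ℝ) := by push_cast; ring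
      rw [hc]
      exact hadd _ e
    have h2 : Filter.Tendsto (fun n => α (w (n + 1))) Filter.atTop (nhds (α p)) :=
      h1.comp (Filter.tendsto_add_atTop_nat 1)
    have h3 : Filter.Tendsto (fun n => g ^ e * α (w n)) Filter.atTop (nhds (g ^ e * α p)) :=
      ((hleft (g ^ e)).tendsto _).comp h1
    have h4 : Filter.Tendsto (fun n => α (w (n + 1))) Filter.atTop (nhds (g ^ e * α p)) :=
      Filter.Tendsto.congr (fun n => (hshift n).symm) h3
    have h5 : α p = g ^ e * α p := tendsto_nhds_unique h2 h4
    have h6 : g ^ e = 1 := mul_right_cancel (a := g ^ e) (b := α p) (c := 1)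
      (by rw [one_mul, ← h5])
    rcases hee with he | he <;> subst he
    · rw [zpow_one] at h6
      exact hg1 h6
    · have h7 : g⁻¹ = 1 := by rw [← zpow_neg_one g]; exact h6
      exact hg1 (by rw [← inv_inv g, h7, inv_one])
  -- R is bounded above and below
  have hRbddA : BddAbove R := by
    by_contra hbdd
    apply hunbdd 1 (Or.inl rfl)
    intro n
    obtain ⟨r, hr, hrn⟩ := not_bddAbove_iff.mp hbdd ((1 * n : ℤ) : ℝ)
    have hn0 : (0:ℝ) ≤ ((1 * n : ℤ) : ℝ) := by push_cast; positivity
    have hmem : ((1 * n : ℤ) : ℝ) ∈ uIcc 0 r := by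
      rw [uIcc_of_le (le_trans hn0 hrn.le)]
      exact ⟨hn0, hrn.le⟩
    exact hRconv 0 hR0 r hr hmem
  have hRbddB : BddBelow R := by
    by_contra hbdd
    apply hunbdd (-1) (Or.inr rfl)
    intro n
    obtain ⟨r, hr, hrn⟩ := not_bddBelow_iff.mp hbdd ((-1 * n : ℤ) : ℝ)
    have hn0 : ((-1 * n : ℤ) : ℝ) ≤ 0 := by
      push_cast
      simp [Nat.cast_nonneg]
    have hmem : ((-1 * n : ℤ) : ℝ) ∈ uIcc 0 r := by
      rw [uIcc_of_ge (le_trans hrn.le hn0)]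
      exact ⟨hrn.le, hn0⟩
    exact hRconv 0 hR0 r hr hmem
  obtain ⟨hi, hhi⟩ := hRbddA
  obtain ⟨lo, hlo⟩ := hRbddB
  have hRsub : R ⊆ Icc lo hi := fun r hr => ⟨hlo hr, hhi hr⟩
  have hRcomp : IsCompact R := isCompact_Icc.of_isClosed_subset hRcl hRsub
  have hΓRcomp : IsCompact (Γ '' R) := hRcomp.image hcont
  set I : Set ℝ := {σ | σ ∈ Icc (0:ℝ) 1 ∧ α σ ∈ Γ '' R} with hIdef
  have hIcl : IsClosed I := IsClosed.inter isClosed_Icc (hΓRcomp.isClosed.preimage hα.cont)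
  have hI0 : (0:ℝ) ∈ I := ⟨by norm_num, ⟨0, hR0, show Γ 0 = α 0 by rw [hα.src, hqdef]⟩⟩
  have hIcomp : IsCompact I := isCompact_Icc.of_isClosed_subset hIcl (fun σ h => h.1)
  set σ₀ : ℝ := sSup I with hσ₀def
  have hσ₀I : σ₀ ∈ I := hIcomp.sSup_mem ⟨0, hI0⟩
  have hσ₀max : ∀ σ ∈ I, σ ≤ σ₀ := fun σ h => le_csSup hIcomp.bddAbove h
  have hIrange : ∀ σ ∈ Icc (0:ℝ) 1, α σ ∈ range Γ → σ ∈ I := by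
    rintro σ hσ ⟨r, hr⟩
    refine ⟨hσ, r, ?_, hr⟩
    show Γ r ∈ arcSet huniq q y
    rw [hr, ← hαim]
    exact mem_image_of_mem α hσ
  have hσ₀lt : σ₀ < 1 := by
    rcases lt_or_eq_of_le (hσ₀I.1.2 : σ₀ ≤ 1) with h | h
    · exact h
    · exfalso
      apply hy
      have h2 := hσ₀I.2
      rw [h, hα.tgt] at h2
      obtain ⟨r, _, hr⟩ := h2
      exact ⟨r, hr⟩
  obtain ⟨τ₀, hτ₀R, hτ₀⟩ := hσ₀I.2
  -- for each n, points where the off-line arc returns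
  have key : ∀ n : ℕ, ∃ u' v' : ℝ, u' ∈ Icc σ₀ (σ₀ + (1-σ₀)/(n+1)) ∧
      v' ∈ Icc σ₀ (σ₀ + (1-σ₀)/(n+1)) ∧ α u' = g * α v' := by
    intro n
    set ε : ℝ := (1-σ₀)/(n+1) with hεdef
    have hn1 : (1:ℝ) ≤ (n:ℝ) + 1 := le_add_of_nonneg_left (Nat.cast_nonneg n)
    have hε : 0 < ε := div_pos (by linarith) (by linarith)
    have hσε1 : σ₀ + ε ≤ 1 := by
      have h1 : ε ≤ 1 - σ₀ := div_le_self (by linarith) hn1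
      linarith
    have hσεmem : σ₀ + ε ∈ Icc (0:ℝ) 1 := ⟨by linarith [hσ₀I.1.1], hσε1⟩
    have hσεnotI : σ₀ + ε ∉ I := fun h => absurd (hσ₀max _ h) (by linarith)
    have hq'range : α (σ₀ + ε) ∉ range Γ := fun h => hσεnotI (hIrange _ hσεmem h)
    have hne1 : σ₀ + ε ≠ σ₀ := by linarith
    have huIccsub : uIcc (σ₀ + ε) σ₀ ⊆ Icc (0:ℝ) 1 := by
      rw [uIcc_of_ge (by linarith)]
      exact Icc_subset_Icc hσ₀I.1.1 hσε1
    obtain ⟨hδ₁, hδ₁im⟩ := arcFn_reparam hα.cont (hα.injOn.mono huIccsub) hne1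
    obtain ⟨hδ₁r, hδ₁rim⟩ := hδ₁.reverse
    obtain ⟨hδ₃, hδ₃im⟩ := hδ₁r.lmul g (hleft g)
    have hne2 : τ₀ ≠ τ₀ + 1 := by linarith
    obtain ⟨hδ₂, hδ₂im⟩ := arcFn_reparam hcont (hinj.injOn) hne2
    have hgb : Γ (τ₀ + 1) = g * α σ₀ := by rw [hadd1, hτ₀]
    have hδ₂' : ArcFn (fun t => Γ (τ₀ + t * (τ₀ + 1 - τ₀))) (α σ₀) (g * α σ₀) := by
      rw [← hgb, ← hτ₀]
      exact hδ₂
    have hq'gb : α (σ₀ + ε) ≠ g * α σ₀ := by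
      intro h
      apply hq'range
      rw [h, ← hgb]
      exact ⟨τ₀ + 1, rfl⟩
    have hq'gq' : α (σ₀ + ε) ≠ g * α (σ₀ + ε) := fun h => nofix _ h.symm
    have hsub := arcSet_subset_join3 huniq hδ₁ hδ₂' hδ₃ hq'gb hq'gq'
    have hdisj := hS2 _ hq'range
    rw [eq_empty_iff_forall_notMem] at hdisj
    have hsub2 : arcSet huniq (α (σ₀ + ε)) (g * α (σ₀ + ε)) ⊆
        ((fun t => α ((σ₀ + ε) + t * (σ₀ - (σ₀ + ε)))) '' Icc 0 1) ∪
        ((fun u => g * (fun u' => (fun t => α ((σ₀ + ε) + t * (σ₀ - (σ₀ + ε)))) (1 - u')) u) ''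
          Icc 0 1) := by
      intro z hz
      rcases hsub hz with (h | h) | h
      · exact Or.inl h
      · exfalso
        rw [hδ₂im] at h
        obtain ⟨r, _, hr⟩ := h
        exact hdisj z ⟨hz, ⟨r, hr⟩⟩
      · exact Or.inr h
    obtain ⟨β, hβ, hβim⟩ := arcSet_arcFn huniq hq'gq'
    have hconn : IsPreconnected (arcSet huniq (α (σ₀ + ε)) (g * α (σ₀ + ε))) := by
      rw [← hβim]
      exact (isPreconnected_Icc).image β hβ.cont.continuousOn
    have hc1 : IsClosed ((fun t => α ((σ₀ + ε) + t * (σ₀ - (σ₀ + ε)))) '' Icc 0 1) :=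
      (isCompact_Icc.image hδ₁.cont).isClosed
    have hc3 : IsClosed ((fun u => g * (fun u' =>
        (fun t => α ((σ₀ + ε) + t * (σ₀ - (σ₀ + ε)))) (1 - u')) u) '' Icc 0 1) :=
      (isCompact_Icc.image hδ₃.cont).isClosed
    have hz1mem : α (σ₀ + ε) ∈ arcSet huniq (α (σ₀ + ε)) (g * α (σ₀ + ε)) :=
      left_mem_arcSet huniq hq'gq'
    have hz3mem : g * α (σ₀ + ε) ∈ arcSet huniq (α (σ₀ + ε)) (g * α (σ₀ + ε)) :=
      right_mem_arcSet huniq hq'gq'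
    obtain ⟨z, hzarc, hz1, hz3⟩ := isPreconnected_closed_iff.mp hconn _ _ hc1 hc3 hsub2
      ⟨_, hz1mem, hδ₁.src_mem⟩ ⟨_, hz3mem, hδ₃.tgt_mem⟩
    -- decode z
    rw [hδ₁im] at hz1
    obtain ⟨u', hu', hueq⟩ := hz1
    rw [uIcc_of_ge (by linarith)] at hu'
    rw [hδ₃im, hδ₁rim, hδ₁im] at hz3
    obtain ⟨w, ⟨v', hv', hveq⟩, hgw⟩ := hz3
    rw [uIcc_of_ge (by linarith)] at hv'
    refine ⟨u', v', hu', hv', ?_⟩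
    rw [hueq]
    show z = g * α v'
    rw [← hgw, hveq]
  choose u v humem hvmem huv using key
  have hεlim : Filter.Tendsto (fun n : ℕ => σ₀ + (1-σ₀)/(n+1)) Filter.atTop (nhds σ₀) := by
    have h0 : Filter.Tendsto (fun n : ℕ => (1-σ₀) * (1/(n+1))) Filter.atTop (nhds ((1-σ₀)*0)) :=
      tendsto_one_div_add_atTop_nhds_zero_nat.const_mul (1-σ₀)
    have h1 : Filter.Tendsto (fun n : ℕ => (1-σ₀)/(n+1)) Filter.atTop (nhds 0) := by
      rw [show (1-σ₀)*0 = 0 by ring] at h0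
      apply h0.congr
      intro n
      rw [mul_one_div]
    have h2 := h1.const_add σ₀
    rw [add_zero] at h2
    exact h2
  have hulim : Filter.Tendsto u Filter.atTop (nhds σ₀) :=
    tendsto_of_tendsto_of_tendsto_of_le_of_le tendsto_const_nhds hεlim
      (fun n => (humem n).1) (fun n => (humem n).2)
  have hvlim : Filter.Tendsto v Filter.atTop (nhds σ₀) :=
    tendsto_of_tendsto_of_tendsto_of_le_of_le tendsto_const_nhds hεlim
      (fun n => (hvmem n).1) (fun n => (hvmem n).2)
  have h1 : Filter.Tendsto (fun n => α (u n)) Filter.atTop (nhds (α σ₀)) :=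
    (hα.cont.tendsto σ₀).comp hulim
  have h2 : Filter.Tendsto (fun n => g * α (v n)) Filter.atTop (nhds (g * α σ₀)) :=
    ((hleft g).tendsto _).comp ((hα.cont.tendsto σ₀).comp hvlim)
  have h3 : Filter.Tendsto (fun n => α (u n)) Filter.atTop (nhds (g * α σ₀)) :=
    Filter.Tendsto.congr (fun n => (huv n).symm) h2
  exact nofix (α σ₀) (tendsto_nhds_unique h1 h3).symm

end Line

/-- A topological tree (a metrizable, uniquely arcwise connected, locally
arcwise connected space) carrying a group structure with continuous left and
right translations, and having more than one point, is homeomorphic to `ℝ`. -/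
theorem stmt18 {X : Type*} [TopologicalSpace X] [TopologicalSpace.MetrizableSpace X]
    [Group X]
    (huniq : ∀ x y : X, x ≠ y → ∃! A : Set X, IsArcBetween A x y)
    (hloc : ∀ (x : X), ∀ U ∈ nhds x, ∃ V, IsOpen V ∧ x ∈ V ∧ V ⊆ U ∧
      ∀ y ∈ V, ∀ z ∈ V, y ≠ z → ∃ A ⊆ V, IsArcBetween A y z)
    (hleft : ∀ g : X, Continuous fun x => g * x)
    (hright : ∀ g : X, Continuous fun x => x * g)
    (hcard : ∃ x y : X, x ≠ y) :
    Nonempty (X ≃ₜ ℝ) := by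
  obtain ⟨a, b, hab⟩ := hcard
  set g : X := b * a⁻¹ with hgdef
  have hg : g ≠ 1 := by
    intro h
    exact hab (mul_inv_eq_one.mp h).symm
  obtain ⟨x₀, γ, hJ, hO⟩ := axis_exists huniq hleft hg
  have hcont : Continuous (lineMap g γ) := lineMap_continuous hJ hleft
  have hinj : Function.Injective (lineMap g γ) := lineMap_injective huniq hleft hJ hO
  have hsurj : Function.Surjective (lineMap g γ) := lineMap_surjective huniq hleft hright hJ hO
  set Γ : ℝ → X := lineMap g γ with hΓ
  have hopen : IsOpenMap Γ := by
    intro U hU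
    rw [isOpen_iff_mem_nhds]
    rintro z ⟨t, ht, rfl⟩
    obtain ⟨l, u', htlu, hsub⟩ := mem_nhds_iff_exists_Ioo_subset.mp (hU.mem_nhds ht)
    have hfin : ({Γ l, Γ u'} : Set X).Finite := Set.toFinite _
    have hU₀open : IsOpen ({Γ l, Γ u'}ᶜ : Set X) := hfin.isClosed.isOpen_compl
    have hmem : Γ t ∈ ({Γ l, Γ u'}ᶜ : Set X) := by
      simp only [mem_compl_iff, mem_insert_iff, mem_singleton_iff]
      push_neg
      constructor
      · intro h
        have := hinj h
        have hlt := htlu.1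
        linarith
      · intro h
        have := hinj h
        have hlt := htlu.2
        linarith
    obtain ⟨V, hVopen, hVz, hVsub, hVarc⟩ := hloc (Γ t) _ (hU₀open.mem_nhds hmem)
    have hVsub2 : V ⊆ Γ '' Ioo l u' := by
      intro z hz
      rcases eq_or_ne z (Γ t) with rfl | hne
      · exact ⟨t, htlu, rfl⟩
      · obtain ⟨A, hAV, hA⟩ := hVarc (Γ t) hVz z hz (Ne.symm hne)
        obtain ⟨r, rfl⟩ := hsurj z
        have hrt : t ≠ r := fun h => hne (by rw [h])
        have hAeq : A = arcSet huniq (Γ t) (Γ r) :=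
          hA.arcSet_eq huniq (fun h => hne (h.symm))
        have harc : arcSet huniq (Γ t) (Γ r) = Γ '' uIcc t r :=
          (lineMap_arcSet huniq hleft hJ hO hrt).symm
        have hnotmem : ∀ w : X, w ∈ A → w ∈ ({Γ l, Γ u'}ᶜ : Set X) := fun w hw => hVsub (hAV hw)
        have hl : l ∉ uIcc t r := by
          intro h
          have : Γ l ∈ A := by
            rw [hAeq, harc]
            exact mem_image_of_mem Γ h
          have h2 := hnotmem _ this
          simp at h2
        have hu : u' ∉ uIcc t r := by
          intro h
          have : Γ u' ∈ A := by
            rw [hAeq, harc]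
            exact mem_image_of_mem Γ h
          have h2 := hnotmem _ this
          simp at h2
        have hr : r ∈ Ioo l u' := by
          rcases le_total t r with h | h
          · rw [uIcc_of_le h] at hl hu
            constructor
            · linarith [htlu.1]
            · by_contra hcon
              push_neg at hcon
              exact hu ⟨le_of_lt htlu.2, hcon⟩
          · rw [uIcc_of_ge h] at hl hu
            constructor
            · by_contra hcon
              push_neg at hcon
              exact hl ⟨hcon, le_of_lt htlu.1⟩
            · linarith [htlu.2]
        exact ⟨r, hr, rfl⟩
    exact Filter.mem_of_superset (hVopen.mem_nhds hVz) (hVsub2.trans (image_mono (f := Γ) hsub))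
  exact ⟨(Equiv.toHomeomorphOfContinuousOpen
    (Equiv.ofBijective Γ ⟨hinj, hsurj⟩) hcont hopen).symm⟩
end
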